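/- arXiv:math/0509518 — 4 statements merged into one kernel-verified Lean document; each statement's English description precedes it below -/
import Mathlib

section
/- The set of branching points of a complete, locally compact rooted real tree is at most countable: if (T,d,ρ) is a complete, locally compact rooted real tree, then Br(T) = {s ∈ T \ {ρ} : T \ {s} has at least 3 connected components} is a countable set. -/
/-- The property of `f` being the (unique) isometric arc-parametrisation joining `s` to `t`
in a metric space. -/
def arcProp {T : Type*} [MetricSpace T] (s t : T)
    (f : Set.Icc (0 : ℝ) (dist s t) → T) : Prop :=
  Isometry f ∧ f ⟨0, Set.left_mem_Icc.2 dist_nonneg⟩ = s ∧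
    f ⟨dist s t, Set.right_mem_Icc.2 dist_nonneg⟩ = t

/-- A metric space is a real tree if any two points are joined by a unique isometric arc,
and every continuous injective path has as image the corresponding arc. -/
def IsRealTree (T : Type*) [MetricSpace T] : Prop :=
  (∀ s t : T, ∃! f : Set.Icc (0 : ℝ) (dist s t) → T, arcProp s t f) ∧
  (∀ q : Set.Icc (0 : ℝ) (1 : ℝ) → T, Continuous q → Function.Injective q →
    ∀ f : Set.Icc (0 : ℝ)
        (dist (q ⟨0, Set.left_mem_Icc.2 zero_le_one⟩)
              (q ⟨1, Set.right_mem_Icc.2 zero_le_one⟩)) → T,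
      arcProp (q ⟨0, Set.left_mem_Icc.2 zero_le_one⟩)
              (q ⟨1, Set.right_mem_Icc.2 zero_le_one⟩) f →
      Set.range q = Set.range f)

/-- The degree of a point: the number of connected components of the complement. -/
noncomputable def treeDegree {T : Type*} [MetricSpace T] (s : T) : Cardinal :=
  Cardinal.mk (ConnectedComponents {x : T // x ≠ s})

/-- The set of branching points of a rooted real tree: points distinct from the root whose
complement has at least 3 connected components. -/
def branchPoints {T : Type*} [MetricSpace T] (ρ : T) : Set T :=
  {s : T | s ≠ ρ ∧ 3 ≤ treeDegree s}

/-!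
A complete, locally compact geodesic space is proper (Hopf–Rinow): since `closedBall x r` lies
within `r - r'` of `closedBall x r'`, the radii `r` for which `closedBall x r` is compact form a
down-closed set which contains its supremum by completeness and exceeds each of its members by
local compactness, so it is all of `ℝ`. Hence the tree is separable; fix a countable dense set
`D`. A branch point `s` has three complementary components, each containing a point of `D`, and
the geodesic between points of different components passes through `s`. So `s` lies on the three
geodesics joining some `a, b, c ∈ D`, which pins down its distance
`(d(a,b) + d(a,c) - d(b,c)) / 2` to `a` and hence `s` itself: `s ↦ (a, b, c)` is injective.
-/

open Set Metric

theorem totallyBounded_of_forall_subset_thickening {α : Type*} [PseudoMetricSpace α] {s : Set α}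
    (h : ∀ ε > 0, ∃ K, IsCompact K ∧ s ⊆ thickening ε K) : TotallyBounded s := by
  refine totallyBounded_iff.2 fun ε hε => ?_
  obtain ⟨K, hK, hsK⟩ := h (ε / 2) (half_pos hε)
  obtain ⟨t, -, ht, hKt⟩ := finite_cover_balls_of_compact hK (half_pos hε)
  refine ⟨t, ht, fun y hy => ?_⟩
  obtain ⟨z, hzK, hyz⟩ := mem_thickening_iff.1 (hsK hy)
  obtain ⟨w, hwt, hzw⟩ := mem_iUnion₂.1 (hKt hzK)
  refine mem_iUnion₂.2 ⟨w, hwt, ?_⟩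
  calc dist y w ≤ dist y z + dist z w := dist_triangle y z w
    _ < ε / 2 + ε / 2 := add_lt_add hyz hzw
    _ = ε := add_halves ε

def IsGeodesicSpace (T : Type*) [MetricSpace T] : Prop :=
  ∀ x y : T, ∃ γ : Icc (0 : ℝ) (dist x y) → T, arcProp x y γ

theorem IsRealTree.isGeodesicSpace {T : Type*} [MetricSpace T] (hT : IsRealTree T) :
    IsGeodesicSpace T :=
  fun x y => (hT.1 x y).exists

namespace IsGeodesicSpace

variable {T : Type*} [MetricSpace T]

noncomputable def arc (hT : IsGeodesicSpace T) (x y : T) : Icc (0 : ℝ) (dist x y) → T :=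
  (hT x y).choose

theorem arcProp_arc (hT : IsGeodesicSpace T) (x y : T) : arcProp x y (hT.arc x y) :=
  (hT x y).choose_spec

theorem dist_arc_left (hT : IsGeodesicSpace T) (x y : T) (u : Icc (0 : ℝ) (dist x y)) :
    dist x (hT.arc x y u) = u := by
  obtain ⟨hiso, hx, -⟩ := hT.arcProp_arc x y
  have h := hiso.dist_eq ⟨0, left_mem_Icc.2 dist_nonneg⟩ u
  rw [hx] at h
  rw [h, Subtype.dist_eq, Real.dist_eq, zero_sub, abs_neg, abs_of_nonneg u.2.1]

theorem dist_arc_right (hT : IsGeodesicSpace T) (x y : T) (u : Icc (0 : ℝ) (dist x y)) :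
    dist (hT.arc x y u) y = dist x y - u := by
  obtain ⟨hiso, -, hy⟩ := hT.arcProp_arc x y
  have h := hiso.dist_eq u ⟨dist x y, right_mem_Icc.2 dist_nonneg⟩
  rw [hy] at h
  rw [h, Subtype.dist_eq, Real.dist_eq, abs_sub_comm, abs_of_nonneg (sub_nonneg.2 u.2.2)]

theorem closedBall_add_subset_cthickening (hT : IsGeodesicSpace T) (x : T) {r δ : ℝ}
    (hr : 0 ≤ r) (hδ : 0 ≤ δ) : closedBall x (r + δ) ⊆ cthickening δ (closedBall x r) := by
  intro y hy
  rw [mem_closedBall, dist_comm] at hy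
  let z := hT.arc x y ⟨min r (dist x y), le_min hr dist_nonneg, min_le_right _ _⟩
  have hxz : dist x z = min r (dist x y) := hT.dist_arc_left x y _
  have hzy : dist z y = dist x y - min r (dist x y) := hT.dist_arc_right x y _
  refine mem_cthickening_of_dist_le y z δ _ ?_ ?_
  · rw [mem_closedBall, dist_comm, hxz]
    exact min_le_left _ _
  · rw [dist_comm, hzy, sub_le_iff_le_add', ← sub_le_iff_le_add]
    exact le_min (by linarith) (by linarith)

theorem exists_isCompact_closedBall_add [LocallyCompactSpace T] (hT : IsGeodesicSpace T) {x : T}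
    {r : ℝ} (hr : 0 ≤ r) (hc : IsCompact (closedBall x r)) :
    ∃ δ > 0, IsCompact (closedBall x (r + δ)) := by
  obtain ⟨δ, hδ, hcδ⟩ := hc.exists_isCompact_cthickening
  exact ⟨δ, hδ, hcδ.of_isClosed_subset isClosed_closedBall
    (hT.closedBall_add_subset_cthickening x hr hδ.le)⟩

theorem isCompact_closedBall_of_forall_lt [CompleteSpace T] (hT : IsGeodesicSpace T) {x : T}
    {r : ℝ} (hr : 0 < r) (hc : ∀ r' < r, IsCompact (closedBall x r')) :
    IsCompact (closedBall x r) := by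
  refine (totallyBounded_of_forall_subset_thickening fun ε hε => ?_).isCompact_of_isClosed
    isClosed_closedBall
  set δ := min (r / 2) (ε / 2)
  have hδ : 0 < δ := lt_min (half_pos hr) (half_pos hε)
  refine ⟨closedBall x (r - δ), hc _ (sub_lt_self r hδ), ?_⟩
  calc closedBall x r = closedBall x (r - δ + δ) := by rw [sub_add_cancel]
    _ ⊆ cthickening δ (closedBall x (r - δ)) :=
        hT.closedBall_add_subset_cthickening x (by linarith [min_le_left (r / 2) (ε / 2)]) hδ.le
    _ ⊆ thickening ε (closedBall x (r - δ)) :=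
        cthickening_subset_thickening' hε (by linarith [min_le_right (r / 2) (ε / 2)]) _

theorem isCompact_closedBall [CompleteSpace T] [LocallyCompactSpace T] (hT : IsGeodesicSpace T)
    (x : T) (r : ℝ) : IsCompact (closedBall x r) := by
  set S := {t : ℝ | IsCompact (closedBall x t)}
  have hmono : ∀ {t t'}, t ≤ t' → t' ∈ S → t ∈ S := fun h ht' =>
    ht'.of_isClosed_subset isClosed_closedBall (closedBall_subset_closedBall h)
  suffices hS : ¬BddAbove S by
    obtain ⟨r', hr', hrr'⟩ := not_bddAbove_iff.1 hS r
    exact hmono hrr'.le hr'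
  intro hbdd
  obtain ⟨δ, hδ, hδS⟩ := hT.exists_isCompact_closedBall_add (x := x) le_rfl
    (by rw [closedBall_zero]; exact isCompact_singleton)
  rw [zero_add] at hδS
  have hSne : S.Nonempty := ⟨δ, hδS⟩
  have hR : 0 < sSup S := hδ.trans_le (le_csSup hbdd hδS)
  have hRS : sSup S ∈ S := hT.isCompact_closedBall_of_forall_lt hR fun r' hr' => by
    obtain ⟨r'', hr''S, hr'r''⟩ := exists_lt_of_lt_csSup hSne hr'
    exact hmono hr'r''.le hr''S
  obtain ⟨δ', hδ', hδ'S⟩ := hT.exists_isCompact_closedBall_add hR.le hRS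
  linarith [le_csSup hbdd hδ'S]

theorem properSpace [CompleteSpace T] [LocallyCompactSpace T] (hT : IsGeodesicSpace T) :
    ProperSpace T :=
  ⟨hT.isCompact_closedBall⟩

theorem dist_add_dist_of_mem_range_arc (hT : IsGeodesicSpace T) {s a b : T}
    (h : s ∈ range (hT.arc a b)) : dist a s + dist s b = dist a b := by
  obtain ⟨u, rfl⟩ := h
  rw [hT.dist_arc_left, hT.dist_arc_right, add_sub_cancel]

theorem eq_of_mem_range_arc_of_dist_eq (hT : IsGeodesicSpace T) {s s' a b : T}
    (hs : s ∈ range (hT.arc a b)) (hs' : s' ∈ range (hT.arc a b)) (hd : dist a s = dist a s') :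
    s = s' := by
  obtain ⟨u, rfl⟩ := hs
  obtain ⟨u', rfl⟩ := hs'
  rw [hT.dist_arc_left, hT.dist_arc_left] at hd
  rw [Subtype.ext hd]

def IsMedian (hT : IsGeodesicSpace T) (s : T) (p : Fin 3 → T) : Prop :=
  ∀ i j, i ≠ j → s ∈ range (hT.arc (p i) (p j))

theorem IsMedian.unique {hT : IsGeodesicSpace T} {s s' : T} {p : Fin 3 → T}
    (h : hT.IsMedian s p) (h' : hT.IsMedian s' p) : s = s' := by
  have e01 := hT.dist_add_dist_of_mem_range_arc (h 0 1 (by decide))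
  have e02 := hT.dist_add_dist_of_mem_range_arc (h 0 2 (by decide))
  have e12 := hT.dist_add_dist_of_mem_range_arc (h 1 2 (by decide))
  have e01' := hT.dist_add_dist_of_mem_range_arc (h' 0 1 (by decide))
  have e02' := hT.dist_add_dist_of_mem_range_arc (h' 0 2 (by decide))
  have e12' := hT.dist_add_dist_of_mem_range_arc (h' 1 2 (by decide))
  refine hT.eq_of_mem_range_arc_of_dist_eq (h 0 1 (by decide)) (h' 0 1 (by decide)) ?_
  linarith [dist_comm s (p 1), dist_comm s' (p 1)]

theorem mem_range_arc_of_connectedComponents_ne (hT : IsGeodesicSpace T) {s : T}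
    {x y : {z : T // z ≠ s}} (h : (x : ConnectedComponents {z : T // z ≠ s}) ≠ y) :
    s ∈ range (hT.arc x y) := by
  by_contra hs
  let γ : Icc (0 : ℝ) (dist x.1 y.1) → {z : T // z ≠ s} :=
    fun u => ⟨hT.arc x y u, fun e => hs ⟨u, e⟩⟩
  have hγ : Continuous γ := (hT.arcProp_arc x y).1.continuous.subtype_mk _
  have : PreconnectedSpace (Icc (0 : ℝ) (dist x.1 y.1)) :=
    Subtype.preconnectedSpace isPreconnected_Icc
  have hx : x ∈ range γ := ⟨_, Subtype.ext (hT.arcProp_arc x y).2.1⟩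
  have hy : y ∈ range γ := ⟨_, Subtype.ext (hT.arcProp_arc x y).2.2⟩
  exact h (ConnectedComponents.coe_eq_coe'.2
    ((isPreconnected_range hγ).subset_connectedComponent hy hx))

theorem connectedComponents_mk_eq_of_dist_lt (hT : IsGeodesicSpace T) {s : T}
    {x y : {z : T // z ≠ s}} (h : dist x.1 y.1 < dist x.1 s) :
    (x : ConnectedComponents {z : T // z ≠ s}) = y := by
  by_contra hne
  obtain ⟨u, hu⟩ := hT.mem_range_arc_of_connectedComponents_ne hne
  have hxs := hT.dist_arc_left x y u
  rw [hu] at hxs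
  linarith [u.2.2]

theorem exists_mem_dense_connectedComponents_mk_eq (hT : IsGeodesicSpace T) {D : Set T}
    (hD : Dense D) {s : T} (c : ConnectedComponents {z : T // z ≠ s}) :
    ∃ d : {z : T // z ≠ s}, d.1 ∈ D ∧ (d : ConnectedComponents {z : T // z ≠ s}) = c := by
  obtain ⟨x, rfl⟩ := ConnectedComponents.surjective_coe c
  obtain ⟨d, hdD, hxd⟩ := hD.exists_dist_lt x.1 (dist_pos.2 x.2)
  have hds : d ≠ s := by
    rintro rfl
    exact lt_irrefl _ hxd
  exact ⟨⟨d, hds⟩, hdD, (hT.connectedComponents_mk_eq_of_dist_lt hxd).symm⟩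

theorem exists_isMedian_of_three_le_treeDegree (hT : IsGeodesicSpace T) {D : Set T}
    (hD : Dense D) {s : T} (h3 : 3 ≤ treeDegree s) :
    ∃ p : Fin 3 → T, (∀ i, p i ∈ D) ∧ hT.IsMedian s p := by
  obtain ⟨e⟩ : Nonempty (Fin 3 ↪ ConnectedComponents {z : T // z ≠ s}) :=
    Cardinal.lift_mk_le'.1 (by simpa [treeDegree] using h3)
  choose d hdD hd using fun i => hT.exists_mem_dense_connectedComponents_mk_eq hD (e i)
  refine ⟨fun i => d i, hdD, fun i j hij => hT.mem_range_arc_of_connectedComponents_ne ?_⟩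
  rw [hd, hd]
  exact e.injective.ne hij

theorem countable_setOf_three_le_treeDegree [TopologicalSpace.SeparableSpace T]
    (hT : IsGeodesicSpace T) :
    {s : T | 3 ≤ treeDegree s}.Countable := by
  obtain ⟨D, hDc, hD⟩ := TopologicalSpace.exists_countable_dense T
  have := hDc.to_subtype
  choose p hpD hp using fun s : {s : T | 3 ≤ treeDegree s} =>
    hT.exists_isMedian_of_three_le_treeDegree hD s.2
  have hinj : Function.Injective fun s i => (⟨p s i, hpD s i⟩ : D) := by
    intro s s' h
    have hps : p s = p s' := funext fun i => congrArg Subtype.val (congrFun h i)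
    exact Subtype.ext ((hp s).unique (hps ▸ hp s'))
  exact countable_coe_iff.1 hinj.countable

end IsGeodesicSpace

/-- The set of branching points of a complete, locally compact rooted real tree is at most
countable. -/
theorem branchPoints_countable (T : Type*) [MetricSpace T] [CompleteSpace T]
    [LocallyCompactSpace T] (ρ : T) (hT : IsRealTree T) :
    (branchPoints ρ).Countable := by
  have hg := hT.isGeodesicSpace
  have := hg.properSpace
  exact hg.countable_setOf_three_le_treeDegree.mono fun _ hs => hs.2
end

section
/- Let (T,d,ρ) be a complete, locally compact rooted real tree. Then Lf(T) is a Borel subset of T, and there exists a unique Borel measure ℓ_T on T (the length measure) such that ℓ_T(Lf(T)) = 0 and ℓ_T([[s,s']]) = d(s,s') for all s, s' ∈ Sk(T). -/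
/-- The set of leaves of a rooted real tree: points distinct from the root whose complement
is connected (degree one). -/
def treeLeaves {T : Type*} [MetricSpace T] (ρ : T) : Set T :=
  {s : T | s ≠ ρ ∧ treeDegree s = 1}

/-- The (internal) skeleton of a rooted real tree: the complement of the set of leaves. -/
def treeSkeleton {T : Type*} [MetricSpace T] (ρ : T) : Set T :=
  Set.univ \ treeLeaves ρ

/-- The arc `[[s,t]]` between two points of a real tree: the image of the isometric
parametrisation joining `s` to `t`. -/
def treeArc {T : Type*} [MetricSpace T] (s t : T) : Set T :=
  {x : T | ∃ f : Set.Icc (0 : ℝ) (dist s t) → T, arcProp s t f ∧ x ∈ Set.range f}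

/-!
Membership in an arc is metric, `p ∈ [[s,t]] ↔ d(s,p) + d(p,t) = d(s,t)`, and the second axiom
of real trees yields the three-arc property `[[s,t]] ⊆ [[s,u]] ∪ [[u,t]]`. Hence `x ∈ [[a,z]]` is
locally constant in `z ≠ x`, so the leaves are the points `x ≠ ρ` that lie on an arc `[[ρ,t]]`
only as its endpoint, and arcs between skeleton points stay in the skeleton. A Hopf–Rinow argument
makes a complete locally compact real tree proper, hence separable, so the skeleton is a countable
union of arcs `[[ρ,e]]` and is Borel. The length measure is the one-dimensional Hausdorff measure
restricted to the skeleton. Conversely, the push-forward along `d(ρ,·)` of any admissible measure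
restricted to `[[ρ,c]]` is Lebesgue measure on `[0, d(ρ,c)]`, which pins the measure down on each
arc, hence on the skeleton, hence everywhere as it vanishes on the leaves.
-/

open Set MeasureTheory Metric

theorem Path.injective_trans {X : Type*} [TopologicalSpace X] {x y z : X} {γ : Path x y}
    {γ' : Path y z} (hγ : Function.Injective γ) (hγ' : Function.Injective γ')
    (h : range γ ∩ range γ' ⊆ {y}) : Function.Injective (γ.trans γ') := by
  have meet : ∀ a b, γ a = γ' b → (a : ℝ) = 1 ∧ (b : ℝ) = 0 := by
    intro a b hab
    have hy : γ a = y := h ⟨⟨a, rfl⟩, ⟨b, hab.symm⟩⟩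
    refine ⟨congrArg Subtype.val (hγ (hy.trans γ.target.symm)),
      congrArg Subtype.val (hγ' (hab.symm.trans hy |>.trans γ'.source.symm))⟩
  intro a b hab
  simp only [Path.trans_apply] at hab
  split_ifs at hab with ha hb hb
  · exact Subtype.ext (by simpa using congrArg Subtype.val (hγ hab))
  · have := meet _ _ hab
    simp only at this
    linarith
  · have := meet _ _ hab.symm
    simp only at this
    linarith
  · exact Subtype.ext (by simpa using congrArg Subtype.val (hγ' hab))

theorem dist_concat_eq_abs_sub {X : Type*} [PseudoMetricSpace X] {u v : ℝ → X} {d₁ d₂ : ℝ}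
    (hu : ∀ a ∈ Icc 0 d₁, ∀ b ∈ Icc 0 d₁, dist (u a) (u b) = |a - b|)
    (hv : ∀ a ∈ Icc 0 d₂, ∀ b ∈ Icc 0 d₂, dist (v a) (v b) = |a - b|)
    (huv : ∀ a ∈ Icc 0 d₁, ∀ b ∈ Icc 0 d₂, dist (u a) (v b) = d₁ - a + b)
    {a b : ℝ} (ha : a ∈ Icc 0 (d₁ + d₂)) (hb : b ∈ Icc 0 (d₁ + d₂)) :
    dist (if a ≤ d₁ then u a else v (a - d₁)) (if b ≤ d₁ then u b else v (b - d₁)) =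
      |a - b| := by
  wlog hab : a ≤ b generalizing a b
  · rw [dist_comm, abs_sub_comm]
    exact this hb ha (le_of_not_ge hab)
  rw [abs_of_nonpos (sub_nonpos.2 hab)]
  by_cases hb₁ : b ≤ d₁
  · rw [if_pos hb₁, if_pos (hab.trans hb₁), hu a ⟨ha.1, hab.trans hb₁⟩ b ⟨ha.1.trans hab, hb₁⟩,
      abs_of_nonpos (sub_nonpos.2 hab)]
  by_cases ha₁ : a ≤ d₁
  · rw [if_pos ha₁, if_neg hb₁, huv a ⟨ha.1, ha₁⟩ (b - d₁) ⟨by linarith, by linarith [hb.2]⟩]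
    ring
  · rw [if_neg ha₁, if_neg hb₁, hv _ ⟨by linarith, by linarith [ha.2]⟩ _
      ⟨by linarith, by linarith [hb.2]⟩, abs_of_nonpos (by linarith)]
    ring

theorem isCompact_closedBall_of_forall_lt {X : Type*} [PseudoMetricSpace X] [CompleteSpace X]
    {x₀ : X}
    (h : ∀ r ε, 0 ≤ r → 0 ≤ ε → closedBall x₀ (r + ε) ⊆ cthickening ε (closedBall x₀ r))
    {R : ℝ} (hR : 0 < R) (hlt : ∀ r < R, IsCompact (closedBall x₀ r)) :
    IsCompact (closedBall x₀ R) := by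
  refine isCompact_iff_totallyBounded_isComplete.2 ⟨?_, isClosed_closedBall.isComplete⟩
  refine Metric.totallyBounded_iff.2 fun ε hε => ?_
  set δ := min (ε / 2) R
  have hδ : 0 < δ := lt_min (half_pos hε) hR
  have hK := hlt (R - δ) (by linarith)
  obtain ⟨t, ht, hcover⟩ := Metric.totallyBounded_iff.1 hK.totallyBounded (ε / 2) (half_pos hε)
  have hsub := h (R - δ) δ (by linarith [min_le_right (ε / 2) R]) hδ.le
  rw [sub_add_cancel, hK.cthickening_eq_biUnion_closedBall hδ.le] at hsub
  refine ⟨t, ht, fun x hx => ?_⟩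
  obtain ⟨y, hy, hxy⟩ := mem_iUnion₂.1 (hsub hx)
  obtain ⟨z, hz, hyz⟩ := mem_iUnion₂.1 (hcover hy)
  rw [mem_closedBall] at hxy
  rw [mem_ball] at hyz
  exact mem_iUnion₂.2 ⟨z, hz, mem_ball.2 (by
    linarith [dist_triangle x y z, min_le_left (ε / 2) R])⟩

/-- Hopf–Rinow; the hypothesis holds as soon as `x₀` is joined to every point by a geodesic. -/
theorem ProperSpace.of_closedBall_add_subset_cthickening {X : Type*} [MetricSpace X]
    [CompleteSpace X] [LocallyCompactSpace X] (x₀ : X)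
    (h : ∀ r ε, 0 ≤ r → 0 ≤ ε → closedBall x₀ (r + ε) ⊆ cthickening ε (closedBall x₀ r)) :
    ProperSpace X := by
  set S := {r : ℝ | IsCompact (closedBall x₀ r)}
  suffices hS : ∀ r, r ∈ S from
    ProperSpace.of_seq_closedBall Filter.tendsto_id (Filter.Eventually.of_forall hS)
  by_contra! ⟨r₀, hr₀⟩
  have hdown : ∀ r ∈ S, ∀ r' ≤ r, r' ∈ S := fun r hr r' hr' =>
    hr.of_isClosed_subset isClosed_closedBall (closedBall_subset_closedBall hr')
  have hbdd : BddAbove S := ⟨r₀, fun r hr => le_of_not_gt fun h => hr₀ (hdown r hr r₀ h.le)⟩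
  have h0 : (0 : ℝ) ∈ S := by simp [S]
  set R := sSup S
  have hR0 : 0 ≤ R := le_csSup hbdd h0
  have hlt : ∀ r < R, r ∈ S := fun r hr =>
    let ⟨r', hr'S, hr'⟩ := exists_lt_of_lt_csSup ⟨0, h0⟩ hr
    hdown r' hr'S r hr'.le
  have hR : R ∈ S := hR0.eq_or_lt.elim (fun h => h ▸ h0)
    (fun hpos => isCompact_closedBall_of_forall_lt h hpos hlt)
  obtain ⟨δ, hδ, hδK⟩ := IsCompact.exists_isCompact_cthickening hR
  have hRδ : R + δ ∈ S := hδK.of_isClosed_subset isClosed_closedBall (h R δ hR0 hδ.le)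
  linarith [le_csSup hbdd hRδ]

theorem treeSkeleton_eq_compl {T : Type*} [MetricSpace T] (ρ : T) :
    treeSkeleton ρ = (treeLeaves ρ)ᶜ :=
  (compl_eq_univ_sdiff _).symm

theorem root_mem_treeSkeleton {T : Type*} [MetricSpace T] (ρ : T) : ρ ∈ treeSkeleton ρ :=
  ⟨trivial, fun h => h.1 rfl⟩

theorem restrict_treeSkeleton_eq_self {T : Type*} [MetricSpace T] [MeasurableSpace T] {ρ : T}
    {μ : Measure T} (hμ : μ (treeLeaves ρ) = 0) : μ.restrict (treeSkeleton ρ) = μ :=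
  Measure.restrict_eq_self_of_ae_mem <| (measure_eq_zero_iff_ae_notMem.1 hμ).mono fun x hx => by
    rwa [treeSkeleton_eq_compl]

noncomputable def treeLengthMeasure {T : Type*} [MetricSpace T] [MeasurableSpace T]
    [BorelSpace T] (ρ : T) : Measure T :=
  (μH[1] : Measure T).restrict (treeSkeleton ρ)

namespace IsRealTree

variable {T : Type*} [MetricSpace T]

theorem treeArc_eq_range (hT : IsRealTree T) {s t : T} {f : Icc (0 : ℝ) (dist s t) → T}
    (hf : arcProp s t f) : treeArc s t = range f := by
  ext x
  constructor
  · rintro ⟨g, hg, hx⟩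
    rwa [(hT.1 s t).unique hg hf] at hx
  · exact fun hx => ⟨f, hf, hx⟩

theorem treeArc_eq_image (hT : IsRealTree T) {s t : T} {g : ℝ → T}
    (hg : ∀ a ∈ Icc 0 (dist s t), ∀ b ∈ Icc 0 (dist s t), dist (g a) (g b) = |a - b|)
    (h0 : g 0 = s) (h1 : g (dist s t) = t) : treeArc s t = g '' Icc 0 (dist s t) := by
  have hf : arcProp s t (fun a => g a) :=
    ⟨Isometry.of_dist_eq fun a b => (hg a a.2 b b.2).trans (Real.dist_eq _ _).symm, h0, h1⟩
  rw [hT.treeArc_eq_range hf, image_eq_range]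

/-- The arc from `s` to `t`, parametrised by arc length and extended to be constant outside
`[0, dist s t]`. -/
noncomputable def geodesic (hT : IsRealTree T) (s t : T) : ℝ → T :=
  (hT.1 s t).exists.choose ∘ projIcc 0 (dist s t) dist_nonneg

theorem continuous_geodesic (hT : IsRealTree T) (s t : T) : Continuous (hT.geodesic s t) :=
  (hT.1 s t).exists.choose_spec.1.continuous.comp continuous_projIcc

theorem dist_geodesic_geodesic (hT : IsRealTree T) {s t : T} {a b : ℝ}
    (ha : a ∈ Icc 0 (dist s t)) (hb : b ∈ Icc 0 (dist s t)) :
    dist (hT.geodesic s t a) (hT.geodesic s t b) = |a - b| := by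
  simp only [geodesic, Function.comp_apply, (hT.1 s t).exists.choose_spec.1.dist_eq,
    projIcc_of_mem _ ha, projIcc_of_mem _ hb, Subtype.dist_eq, Real.dist_eq]

theorem geodesic_zero (hT : IsRealTree T) (s t : T) : hT.geodesic s t 0 = s := by
  simp only [geodesic, Function.comp_apply, projIcc_left]
  exact (hT.1 s t).exists.choose_spec.2.1

theorem geodesic_dist (hT : IsRealTree T) (s t : T) : hT.geodesic s t (dist s t) = t := by
  simp only [geodesic, Function.comp_apply, projIcc_right]
  exact (hT.1 s t).exists.choose_spec.2.2

theorem treeArc_eq_image_geodesic (hT : IsRealTree T) (s t : T) :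
    treeArc s t = hT.geodesic s t '' Icc 0 (dist s t) :=
  hT.treeArc_eq_image (fun _ ha _ hb => hT.dist_geodesic_geodesic ha hb) (hT.geodesic_zero s t)
    (hT.geodesic_dist s t)

theorem dist_geodesic_left (hT : IsRealTree T) {s t : T} {a : ℝ} (ha : a ∈ Icc 0 (dist s t)) :
    dist s (hT.geodesic s t a) = a := by
  have h := hT.dist_geodesic_geodesic (left_mem_Icc.2 dist_nonneg) ha
  rwa [hT.geodesic_zero, zero_sub, abs_neg, abs_of_nonneg ha.1] at h

theorem dist_geodesic_right (hT : IsRealTree T) {s t : T} {a : ℝ} (ha : a ∈ Icc 0 (dist s t)) :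
    dist (hT.geodesic s t a) t = dist s t - a := by
  have h := hT.dist_geodesic_geodesic ha (right_mem_Icc.2 dist_nonneg)
  rwa [hT.geodesic_dist, abs_sub_comm, abs_of_nonneg (sub_nonneg.2 ha.2)] at h

theorem dist_geodesic_geodesic_of_dist_add_dist (hT : IsRealTree T) {s p t : T}
    (hp : dist s p + dist p t = dist s t) {a b : ℝ} (ha : a ∈ Icc 0 (dist s p))
    (hb : b ∈ Icc 0 (dist p t)) :
    dist (hT.geodesic s p a) (hT.geodesic p t b) = dist s p - a + b := by
  have upper := dist_triangle (hT.geodesic s p a) p (hT.geodesic p t b)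
  have lower := dist_triangle4 s (hT.geodesic s p a) (hT.geodesic p t b) t
  rw [hT.dist_geodesic_right ha, hT.dist_geodesic_left hb] at upper
  rw [hT.dist_geodesic_left ha, hT.dist_geodesic_right hb] at lower
  linarith

theorem mem_treeArc_iff (hT : IsRealTree T) {s t p : T} :
    p ∈ treeArc s t ↔ dist s p + dist p t = dist s t := by
  constructor
  · rw [hT.treeArc_eq_image_geodesic]
    rintro ⟨a, ha, rfl⟩
    rw [hT.dist_geodesic_left ha, hT.dist_geodesic_right ha]
    ring
  intro hp
  set d₁ := dist s p
  let g : ℝ → T := fun x => if x ≤ d₁ then hT.geodesic s p x else hT.geodesic p t (x - d₁)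
  have hg : ∀ a ∈ Icc 0 (dist s t), ∀ b ∈ Icc 0 (dist s t), dist (g a) (g b) = |a - b| := by
    rw [← hp]
    exact fun a ha b hb => dist_concat_eq_abs_sub (fun _ ha _ hb => hT.dist_geodesic_geodesic ha hb)
      (fun _ ha _ hb => hT.dist_geodesic_geodesic ha hb)
      (fun _ ha _ hb => hT.dist_geodesic_geodesic_of_dist_add_dist hp ha hb) ha hb
  have hgs : g 0 = s := by
    simp only [g]
    rw [if_pos dist_nonneg]
    exact hT.geodesic_zero s p
  have hgt : g (dist s t) = t := by
    by_cases h : dist s t ≤ d₁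
    · have hpt : p = t := dist_le_zero.1 (by linarith)
      simp only [g, if_pos h]
      rw [show dist s t = d₁ by linarith [dist_nonneg (x := p) (y := t)], ← hpt]
      exact hT.geodesic_dist s p
    · simp only [g, if_neg h]
      rw [show dist s t - d₁ = dist p t by linarith]
      exact hT.geodesic_dist p t
  rw [hT.treeArc_eq_image hg hgs hgt]
  refine ⟨d₁, ⟨dist_nonneg, by linarith [dist_nonneg (x := p) (y := t)]⟩, ?_⟩
  simp only [g, if_pos le_rfl]
  exact hT.geodesic_dist s p

theorem left_mem_treeArc (hT : IsRealTree T) (s t : T) : s ∈ treeArc s t := by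
  simp [hT.mem_treeArc_iff]

theorem right_mem_treeArc (hT : IsRealTree T) (s t : T) : t ∈ treeArc s t := by
  simp [hT.mem_treeArc_iff]

theorem treeArc_comm (hT : IsRealTree T) (s t : T) : treeArc s t = treeArc t s := by
  ext p
  simp only [hT.mem_treeArc_iff, dist_comm, add_comm]

theorem treeArc_self (hT : IsRealTree T) (s : T) : treeArc s s = {s} := by
  ext p
  rw [hT.mem_treeArc_iff, dist_self, mem_singleton_iff, dist_comm p s, ← two_mul,
    mul_eq_zero_iff_left two_ne_zero, dist_eq_zero, eq_comm]

theorem isClosed_treeArc (hT : IsRealTree T) (s t : T) : IsClosed (treeArc s t) := by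
  have h : treeArc s t = {p | dist s p + dist p t = dist s t} := by
    ext p
    exact hT.mem_treeArc_iff
  rw [h]
  exact isClosed_eq (by fun_prop) continuous_const

theorem isCompact_treeArc (hT : IsRealTree T) (s t : T) : IsCompact (treeArc s t) := by
  rw [hT.treeArc_eq_image_geodesic]
  exact isCompact_Icc.image (hT.continuous_geodesic s t)

theorem isPreconnected_treeArc (hT : IsRealTree T) (s t : T) :
    IsPreconnected (treeArc s t) := by
  rw [hT.treeArc_eq_image_geodesic]
  exact isPreconnected_Icc.image _ (hT.continuous_geodesic s t).continuousOn

theorem treeArc_subset_left (hT : IsRealTree T) {s t p : T} (hp : p ∈ treeArc s t) :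
    treeArc s p ⊆ treeArc s t := by
  intro q hq
  rw [hT.mem_treeArc_iff] at *
  linarith [dist_triangle q p t, dist_triangle s q t]

theorem treeArc_subset_right (hT : IsRealTree T) {s t p : T} (hp : p ∈ treeArc s t) :
    treeArc p t ⊆ treeArc s t := by
  rw [hT.treeArc_comm s t, hT.treeArc_comm p t] at *
  exact hT.treeArc_subset_left hp

theorem geodesic_dist_left (hT : IsRealTree T) {s t p : T} (hp : p ∈ treeArc s t) :
    hT.geodesic s t (dist s p) = p := by
  rw [hT.treeArc_eq_image_geodesic] at hp
  obtain ⟨a, ha, rfl⟩ := hp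
  rw [hT.dist_geodesic_left ha]

theorem dist_le_of_mem_treeArc (hT : IsRealTree T) {s t p : T} (hp : p ∈ treeArc s t) :
    dist s p ≤ dist s t := by
  linarith [hT.mem_treeArc_iff.1 hp, dist_nonneg (x := p) (y := t)]

theorem dist_eq_abs_sub_of_mem_treeArc (hT : IsRealTree T) {s t p q : T}
    (hp : p ∈ treeArc s t) (hq : q ∈ treeArc s t) : dist p q = |dist s p - dist s q| := by
  conv_lhs => rw [← hT.geodesic_dist_left hp, ← hT.geodesic_dist_left hq]
  exact hT.dist_geodesic_geodesic ⟨dist_nonneg, hT.dist_le_of_mem_treeArc hp⟩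
    ⟨dist_nonneg, hT.dist_le_of_mem_treeArc hq⟩

theorem treeArc_subset_union_of_mem (hT : IsRealTree T) {s t m : T} (hm : m ∈ treeArc s t) :
    treeArc s t ⊆ treeArc s m ∪ treeArc m t := by
  intro p hp
  have hpm := hT.dist_eq_abs_sub_of_mem_treeArc hp hm
  have hsm := hT.mem_treeArc_iff.1 hm
  have hsp := hT.mem_treeArc_iff.1 hp
  rcases le_total (dist s p) (dist s m) with h | h
  · refine Or.inl (hT.mem_treeArc_iff.2 ?_)
    rw [hpm, abs_of_nonpos (sub_nonpos.2 h)]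
    ring
  · refine Or.inr (hT.mem_treeArc_iff.2 ?_)
    rw [dist_comm, hpm, abs_of_nonneg (sub_nonneg.2 h)]
    linarith

noncomputable def geodesicPath (hT : IsRealTree T) (s t : T) : Path s t where
  toFun x := hT.geodesic s t (dist s t * x)
  continuous_toFun := (hT.continuous_geodesic s t).comp (by fun_prop)
  source' := by simp [hT.geodesic_zero]
  target' := by simp [hT.geodesic_dist]

theorem range_geodesicPath (hT : IsRealTree T) (s t : T) :
    range (hT.geodesicPath s t) = treeArc s t := by
  have h := image_mul_left_Icc (dist_nonneg (x := s) (y := t)) zero_le_one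
  rw [mul_zero, mul_one] at h
  rw [hT.treeArc_eq_image_geodesic, ← h, image_image, image_eq_range]
  rfl

theorem injective_geodesicPath (hT : IsRealTree T) {s t : T} (hst : s ≠ t) :
    Function.Injective (hT.geodesicPath s t) := by
  intro a b hab
  have hmem : ∀ x : unitInterval, dist s t * x ∈ Icc 0 (dist s t) := fun x =>
    ⟨mul_nonneg dist_nonneg x.2.1, mul_le_of_le_one_right dist_nonneg x.2.2⟩
  have h := hT.dist_geodesic_geodesic (hmem a) (hmem b)
  rw [show hT.geodesic s t (dist s t * a) = hT.geodesic s t (dist s t * b) from hab, dist_self,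
    eq_comm, abs_eq_zero, sub_eq_zero] at h
  exact Subtype.ext (mul_left_cancel₀ (dist_ne_zero.2 hst) h)

theorem range_eq_treeArc_of_injective (hT : IsRealTree T) {x y : T} (γ : Path x y)
    (hγ : Function.Injective γ) : range γ = treeArc x y := by
  have hf := (hT.1 (γ 0) (γ 1)).exists.choose_spec
  have h := hT.2 γ γ.continuous hγ _ hf
  rwa [← hT.treeArc_eq_range hf, γ.source, γ.target] at h

/-- The concatenation of `[[t,m]]` and `[[m,u]]` is then an injective path, whose image is
`[[t,u]]` by the second axiom of real trees. -/
theorem mem_treeArc_of_inter_subset (hT : IsRealTree T) {t m u : T}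
    (h : treeArc t m ∩ treeArc m u ⊆ {m}) : m ∈ treeArc t u := by
  rcases eq_or_ne t m with rfl | htm
  · exact hT.left_mem_treeArc t u
  rcases eq_or_ne m u with rfl | hmu
  · exact hT.right_mem_treeArc t m
  have hinj := Path.injective_trans (hT.injective_geodesicPath htm)
    (hT.injective_geodesicPath hmu) (by rwa [hT.range_geodesicPath, hT.range_geodesicPath])
  rw [← hT.range_eq_treeArc_of_injective _ hinj, Path.trans_range, hT.range_geodesicPath]
  exact Or.inl (hT.right_mem_treeArc t m)

theorem exists_median (hT : IsRealTree T) (s t u : T) :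
    ∃ m, m ∈ treeArc s t ∧ m ∈ treeArc s u ∧ m ∈ treeArc t u := by
  obtain ⟨m, ⟨hmt, hmu⟩, hmax⟩ :=
    ((hT.isCompact_treeArc s t).inter_right (hT.isClosed_treeArc s u)).exists_isMaxOn
      ⟨s, hT.left_mem_treeArc s t, hT.left_mem_treeArc s u⟩
      (continuous_const.dist continuous_id).continuousOn
  refine ⟨m, hmt, hmu, hT.mem_treeArc_of_inter_subset ?_⟩
  rintro p ⟨hpt, hpu⟩
  rw [hT.treeArc_comm] at hpt
  have hp : dist s p ≤ dist s m :=
    isMaxOn_iff.1 hmax p ⟨hT.treeArc_subset_right hmt hpt, hT.treeArc_subset_right hmu hpu⟩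
  have e₁ := hT.mem_treeArc_iff.1 hmt
  have e₂ := hT.mem_treeArc_iff.1 hpt
  have e₃ := hT.mem_treeArc_iff.1 (hT.treeArc_subset_right hmt hpt)
  exact dist_le_zero.1 (by linarith [dist_comm p m])

theorem treeArc_subset_union (hT : IsRealTree T) (s t u : T) :
    treeArc s t ⊆ treeArc s u ∪ treeArc u t := by
  obtain ⟨m, hmst, hmsu, hmtu⟩ := hT.exists_median s t u
  rw [hT.treeArc_comm t u] at hmtu
  exact (hT.treeArc_subset_union_of_mem hmst).trans
    (union_subset_union (hT.treeArc_subset_left hmsu) (hT.treeArc_subset_right hmtu))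

theorem mem_treeArc_of_dist_lt (hT : IsRealTree T) {a x z z' : T} (hx : x ∈ treeArc a z)
    (h : dist z z' < dist z x) : x ∈ treeArc a z' := by
  refine (hT.treeArc_subset_union a z z' hx).resolve_right fun hx' => ?_
  linarith [hT.mem_treeArc_iff.1 hx', dist_nonneg (x := z') (y := x), dist_comm x z,
    dist_comm z' z]

theorem isLocallyConstant_mem_treeArc (hT : IsRealTree T) (a x : T) :
    IsLocallyConstant fun z : {y : T // y ≠ x} => x ∈ treeArc a z := by
  refine (IsLocallyConstant.iff_eventually_eq _).2 fun z => ?_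
  have hz : 0 < dist (z : T) x := dist_pos.2 z.2
  filter_upwards [ball_mem_nhds z (half_pos hz)] with z' hz'
  rw [mem_ball, Subtype.dist_eq, dist_comm] at hz'
  have hz'x := dist_triangle (z : T) z' x
  exact propext ⟨fun h => hT.mem_treeArc_of_dist_lt h (by linarith [dist_comm (z' : T) z]),
    fun h => hT.mem_treeArc_of_dist_lt h (by linarith)⟩

theorem treeDegree_eq_one_iff (hT : IsRealTree T) {x : T} (hx : ∃ y, y ≠ x) :
    treeDegree x = 1 ↔ ∀ a b, a ≠ x → b ≠ x → x ∉ treeArc a b := by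
  rw [treeDegree, Cardinal.eq_one_iff_unique]
  constructor
  · rintro ⟨hsub, -⟩ a b ha hb hxab
    have hb' : (⟨b, hb⟩ : {y // y ≠ x}) ∈ connectedComponent ⟨a, ha⟩ :=
      ConnectedComponents.coe_eq_coe'.1 (Subsingleton.elim _ _)
    have h := (hT.isLocallyConstant_mem_treeArc a x).apply_eq_of_isPreconnected
      isPreconnected_connectedComponent mem_connectedComponent hb'
    simp only [hT.treeArc_self, mem_singleton_iff] at h
    exact ha (h ▸ hxab).symm
  · intro h
    obtain ⟨y, hy⟩ := hx
    refine ⟨⟨fun A B => ?_⟩, ⟨ConnectedComponents.mk ⟨y, hy⟩⟩⟩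
    obtain ⟨a, rfl⟩ := ConnectedComponents.surjective_coe A
    obtain ⟨b, rfl⟩ := ConnectedComponents.surjective_coe B
    have hsub : treeArc (a : T) b ⊆ range (Subtype.val : {y // y ≠ x} → T) := by
      rw [Subtype.range_coe_subtype]
      rintro p hp rfl
      exact h a b a.2 b.2 hp
    have hS : IsPreconnected (Subtype.val ⁻¹' treeArc (a : T) b : Set {y // y ≠ x}) := by
      rw [← Topology.IsEmbedding.subtypeVal.isInducing.isPreconnected_image,
        image_preimage_eq_of_subset hsub]
      exact hT.isPreconnected_treeArc (a : T) b
    exact ConnectedComponents.coe_eq_coe'.2 (hS.subset_connectedComponent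
      (hT.left_mem_treeArc (a : T) b) (hT.right_mem_treeArc (a : T) b)) |>.symm

theorem mem_treeLeaves_iff (hT : IsRealTree T) {ρ x : T} :
    x ∈ treeLeaves ρ ↔ x ≠ ρ ∧ ∀ t, x ∈ treeArc ρ t → x = t := by
  refine and_congr_right fun hxρ => ?_
  rw [hT.treeDegree_eq_one_iff ⟨ρ, hxρ.symm⟩]
  constructor
  · intro h t hxt
    by_contra hxt'
    exact h ρ t hxρ.symm (Ne.symm hxt') hxt
  · intro h a b ha hb hxab
    rcases hT.treeArc_subset_union a b ρ hxab with hx | hx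
    · rw [hT.treeArc_comm] at hx
      exact ha (h a hx).symm
    · exact hb (h b hx).symm

theorem mem_treeSkeleton_iff (hT : IsRealTree T) {ρ x : T} :
    x ∈ treeSkeleton ρ ↔ x = ρ ∨ ∃ t, x ∈ treeArc ρ t ∧ x ≠ t := by
  rw [treeSkeleton_eq_compl, mem_compl_iff, hT.mem_treeLeaves_iff, or_iff_not_imp_left]
  simp only [not_and, not_forall, exists_prop]

theorem treeArc_subset_treeSkeleton (hT : IsRealTree T) {ρ a b : T} (ha : a ∈ treeSkeleton ρ)
    (hb : b ∈ treeSkeleton ρ) : treeArc a b ⊆ treeSkeleton ρ := by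
  refine fun p hp => ⟨trivial, fun hpl => ?_⟩
  obtain ⟨-, hend⟩ := hT.mem_treeLeaves_iff.1 hpl
  rcases hT.treeArc_subset_union a b ρ hp with h | h
  · rw [hT.treeArc_comm] at h
    exact ha.2 (hend a h ▸ hpl)
  · exact hb.2 (hend b h ▸ hpl)

theorem closedBall_add_subset_cthickening (hT : IsRealTree T) (ρ : T) {r : ℝ} (ε : ℝ)
    (hr : 0 ≤ r) : closedBall ρ (r + ε) ⊆ cthickening ε (closedBall ρ r) := by
  intro x hx
  rw [mem_closedBall, dist_comm] at hx
  rcases le_total (dist ρ x) r with h | h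
  · exact self_subset_cthickening _ (mem_closedBall.2 (by rwa [dist_comm]))
  · have hr' : r ∈ Icc 0 (dist ρ x) := ⟨hr, h⟩
    refine closedBall_subset_cthickening (x := hT.geodesic ρ x r) (mem_closedBall.2 ?_) ε
      (mem_closedBall.2 ?_)
    · rw [dist_comm, hT.dist_geodesic_left hr']
    · rw [dist_comm, hT.dist_geodesic_right hr']
      linarith

theorem properSpace [CompleteSpace T] [LocallyCompactSpace T] (hT : IsRealTree T) (ρ : T) :
    ProperSpace T :=
  ProperSpace.of_closedBall_add_subset_cthickening ρ fun _ ε hr _ =>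
    hT.closedBall_add_subset_cthickening ρ ε hr

theorem exists_mem_treeArc_between (hT : IsRealTree T) {ρ x t : T} (hx : x ∈ treeArc ρ t)
    (hxt : x ≠ t) : ∃ y ∈ treeArc ρ t, y ≠ t ∧ x ∈ treeArc ρ y ∧ x ≠ y := by
  have hxL : dist ρ x < dist ρ t := by
    linarith [hT.mem_treeArc_iff.1 hx, dist_pos.2 hxt]
  set c := (dist ρ x + dist ρ t) / 2 with hc_def
  have hc : c ∈ Icc 0 (dist ρ t) := ⟨by positivity, by linarith⟩
  have hxc : dist ρ x < c := by linarith
  set y := hT.geodesic ρ t c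
  have hy : y ∈ treeArc ρ t := hT.treeArc_eq_image_geodesic ρ t ▸ mem_image_of_mem _ hc
  have hρy : dist ρ y = c := hT.dist_geodesic_left hc
  have hxy : dist x y = c - dist ρ x := by
    rw [hT.dist_eq_abs_sub_of_mem_treeArc hx hy, hρy, abs_of_nonpos (by linarith), neg_sub]
  refine ⟨y, hy, fun hyt => ?_, hT.mem_treeArc_iff.2 (by rw [hxy, hρy]; ring),
    dist_pos.1 (by linarith)⟩
  rw [hyt] at hρy
  linarith

theorem exists_countable_treeSkeleton_eq_biUnion [TopologicalSpace.SeparableSpace T]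
    (hT : IsRealTree T) (ρ : T) :
    ∃ E ⊆ treeSkeleton ρ, E.Countable ∧ treeSkeleton ρ = ⋃ e ∈ E, treeArc ρ e := by
  obtain ⟨E, hES, hEc, hdense⟩ :=
    (TopologicalSpace.IsSeparable.of_separableSpace (treeSkeleton ρ)).exists_countable_dense_subset
  have hE : insert ρ E ⊆ treeSkeleton ρ := insert_subset (root_mem_treeSkeleton ρ) hES
  refine ⟨insert ρ E, hE, hEc.insert ρ, subset_antisymm ?_ (iUnion₂_subset fun e he =>
    hT.treeArc_subset_treeSkeleton (root_mem_treeSkeleton ρ) (hE he))⟩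
  intro x hx
  rcases hT.mem_treeSkeleton_iff.1 hx with rfl | ⟨t, hxt, hne⟩
  · exact mem_biUnion (mem_insert _ _) (hT.left_mem_treeArc _ _)
  obtain ⟨y, hyt, hyne, hxy, hxney⟩ := hT.exists_mem_treeArc_between hxt hne
  have hyS : y ∈ treeSkeleton ρ := hT.mem_treeSkeleton_iff.2 (Or.inr ⟨t, hyt, hyne⟩)
  obtain ⟨e, he, hye⟩ := Metric.mem_closure_iff.1 (hdense hyS) _ (dist_pos.2 hxney.symm)
  exact mem_biUnion (mem_insert_of_mem _ he) (hT.mem_treeArc_of_dist_lt hxy hye)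

theorem treeArc_inter_preimage_dist_Iic (hT : IsRealTree T) {ρ c : T} {r : ℝ}
    (hr : r ∈ Icc 0 (dist ρ c)) :
    treeArc ρ c ∩ dist ρ ⁻¹' Iic r = treeArc ρ (hT.geodesic ρ c r) := by
  have hg : hT.geodesic ρ c r ∈ treeArc ρ c :=
    hT.treeArc_eq_image_geodesic ρ c ▸ mem_image_of_mem _ hr
  have hρg := hT.dist_geodesic_left hr
  ext p
  constructor
  · rintro ⟨hp, hpr⟩
    rw [mem_preimage, mem_Iic] at hpr
    rw [hT.mem_treeArc_iff, hT.dist_eq_abs_sub_of_mem_treeArc hp hg, hρg,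
      abs_of_nonpos (by linarith)]
    ring
  · intro hp
    exact ⟨hT.treeArc_subset_left hg hp, hρg ▸ hT.dist_le_of_mem_treeArc hp⟩

section Measure

variable [MeasurableSpace T] [BorelSpace T]

theorem hausdorffMeasure_treeArc (hT : IsRealTree T) (s t : T) :
    μH[1] (treeArc s t) = ENNReal.ofReal (dist s t) := by
  have hf := (hT.1 s t).exists.choose_spec
  have hIcc := (isometry_subtype_coe (s := Icc (0 : ℝ) (dist s t))).hausdorffMeasure_image
    (Or.inl zero_le_one) univ
  rw [image_univ, Subtype.range_coe] at hIcc
  rw [hT.treeArc_eq_range hf, ← image_univ, hf.1.hausdorffMeasure_image (Or.inl zero_le_one),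
    ← hIcc, hausdorffMeasure_real, Real.volume_Icc, sub_zero]

theorem map_dist_restrict_treeArc (hT : IsRealTree T) {μ : Measure T} {ρ c : T}
    (hμ : ∀ p ∈ treeArc ρ c, μ (treeArc ρ p) = ENNReal.ofReal (dist ρ p)) :
    (μ.restrict (treeArc ρ c)).map (dist ρ) = volume.restrict (Icc 0 (dist ρ c)) := by
  have hc := hμ c (hT.right_mem_treeArc ρ c)
  have : IsFiniteMeasure (μ.restrict (treeArc ρ c)) :=
    isFiniteMeasure_restrict.2 (hc ▸ ENNReal.ofReal_ne_top)
  have hdist : Measurable (dist ρ) := (continuous_const.dist continuous_id).measurable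
  refine Measure.ext_of_Iic _ _ fun r => ?_
  rw [Measure.map_apply hdist measurableSet_Iic,
    Measure.restrict_apply (hdist measurableSet_Iic), Measure.restrict_apply measurableSet_Iic,
    inter_comm]
  rcases lt_or_ge r 0 with hr | hr
  · have hL : treeArc ρ c ∩ dist ρ ⁻¹' Iic r = ∅ :=
      eq_empty_of_forall_notMem fun p hp => (dist_nonneg.trans_lt (hr.trans_le' hp.2)).false
    have hR : Iic r ∩ Icc 0 (dist ρ c) = ∅ :=
      eq_empty_of_forall_notMem fun x hx => (hx.2.1.trans_lt (hr.trans_le' hx.1)).false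
    rw [hL, hR, measure_empty, measure_empty]
  rcases le_total r (dist ρ c) with hrc | hrc
  · have hR : Iic r ∩ Icc 0 (dist ρ c) = Icc 0 r := by
      ext x
      simp only [mem_inter_iff, mem_Iic, mem_Icc]
      exact ⟨fun h => ⟨h.2.1, h.1⟩, fun h => ⟨h.2, h.1, h.2.trans hrc⟩⟩
    rw [hT.treeArc_inter_preimage_dist_Iic ⟨hr, hrc⟩, hR, Real.volume_Icc, sub_zero,
      hμ _ (hT.treeArc_eq_image_geodesic ρ c ▸ mem_image_of_mem _ ⟨hr, hrc⟩),
      hT.dist_geodesic_left ⟨hr, hrc⟩]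
  · have hL : treeArc ρ c ⊆ dist ρ ⁻¹' Iic r := fun p hp =>
      (hT.dist_le_of_mem_treeArc hp).trans hrc
    have hR : Icc 0 (dist ρ c) ⊆ Iic r := fun x hx => hx.2.trans hrc
    rw [inter_eq_left.2 hL, inter_eq_right.2 hR, Real.volume_Icc, sub_zero, hc]

theorem restrict_treeArc_eq_map (hT : IsRealTree T) {μ : Measure T} {ρ c : T}
    (hμ : ∀ p ∈ treeArc ρ c, μ (treeArc ρ p) = ENNReal.ofReal (dist ρ p)) :
    μ.restrict (treeArc ρ c) = (volume.restrict (Icc 0 (dist ρ c))).map (hT.geodesic ρ c) := by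
  have hdist : Measurable (dist ρ) := (continuous_const.dist continuous_id).measurable
  rw [← hT.map_dist_restrict_treeArc hμ,
    Measure.map_map (hT.continuous_geodesic ρ c).measurable hdist]
  conv_lhs => rw [← Measure.map_id (μ := μ.restrict (treeArc ρ c))]
  refine Measure.map_congr ?_
  filter_upwards [ae_restrict_mem (hT.isClosed_treeArc ρ c).measurableSet] with p hp
  exact (hT.geodesic_dist_left hp).symm

theorem treeLengthMeasure_treeArc (hT : IsRealTree T) {ρ s t : T} (hs : s ∈ treeSkeleton ρ)
    (ht : t ∈ treeSkeleton ρ) : treeLengthMeasure ρ (treeArc s t) = ENNReal.ofReal (dist s t) := by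
  rw [treeLengthMeasure, Measure.restrict_apply (hT.isClosed_treeArc s t).measurableSet,
    inter_eq_self_of_subset_left (hT.treeArc_subset_treeSkeleton hs ht),
    hT.hausdorffMeasure_treeArc]

variable [TopologicalSpace.SeparableSpace T]

theorem measurableSet_treeSkeleton (hT : IsRealTree T) (ρ : T) :
    MeasurableSet (treeSkeleton ρ) := by
  obtain ⟨E, -, hEc, hE⟩ := hT.exists_countable_treeSkeleton_eq_biUnion ρ
  rw [hE]
  exact .biUnion hEc fun e _ => (hT.isClosed_treeArc ρ e).measurableSet

theorem measurableSet_treeLeaves (hT : IsRealTree T) (ρ : T) :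
    MeasurableSet (treeLeaves ρ) := by
  rw [← compl_compl (treeLeaves ρ), ← treeSkeleton_eq_compl]
  exact (hT.measurableSet_treeSkeleton ρ).compl

theorem treeLengthMeasure_treeLeaves (hT : IsRealTree T) (ρ : T) :
    treeLengthMeasure ρ (treeLeaves ρ) = 0 := by
  rw [treeLengthMeasure, Measure.restrict_apply' (hT.measurableSet_treeSkeleton ρ),
    treeSkeleton_eq_compl, inter_compl_self, measure_empty]

theorem restrict_treeSkeleton_congr (hT : IsRealTree T) {ρ : T}
    {μ ν : Measure T}
    (hμ : ∀ s ∈ treeSkeleton ρ, ∀ s' ∈ treeSkeleton ρ,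
      μ (treeArc s s') = ENNReal.ofReal (dist s s'))
    (hν : ∀ s ∈ treeSkeleton ρ, ∀ s' ∈ treeSkeleton ρ,
      ν (treeArc s s') = ENNReal.ofReal (dist s s')) :
    μ.restrict (treeSkeleton ρ) = ν.restrict (treeSkeleton ρ) := by
  obtain ⟨E, hES, hEc, hE⟩ := hT.exists_countable_treeSkeleton_eq_biUnion ρ
  rw [hE, Measure.restrict_biUnion_congr hEc]
  intro e he
  have hsub := hT.treeArc_subset_treeSkeleton (root_mem_treeSkeleton ρ) (hES he)
  rw [hT.restrict_treeArc_eq_map fun p hp => hμ ρ (root_mem_treeSkeleton ρ) p (hsub hp),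
    hT.restrict_treeArc_eq_map fun p hp => hν ρ (root_mem_treeSkeleton ρ) p (hsub hp)]

end Measure

end IsRealTree

/-- On a complete, locally compact rooted real tree, the set of leaves is Borel measurable and
there is a unique Borel measure (the length measure) vanishing on the leaves and giving each
arc between two skeleton points its length. -/
theorem exists_unique_length_measure (T : Type*) [MetricSpace T] [CompleteSpace T]
    [LocallyCompactSpace T] [MeasurableSpace T] [BorelSpace T] (ρ : T) (hT : IsRealTree T) :
    MeasurableSet (treeLeaves ρ) ∧
    ∃! μ : MeasureTheory.Measure T,
      μ (treeLeaves ρ) = 0 ∧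
      ∀ s ∈ treeSkeleton ρ, ∀ s' ∈ treeSkeleton ρ,
        μ (treeArc s s') = ENNReal.ofReal (dist s s') := by
  have := hT.properSpace ρ
  have hlength : ∀ s ∈ treeSkeleton ρ, ∀ s' ∈ treeSkeleton ρ,
      treeLengthMeasure ρ (treeArc s s') = ENNReal.ofReal (dist s s') :=
    fun _ hs _ hs' => hT.treeLengthMeasure_treeArc hs hs'
  refine ⟨hT.measurableSet_treeLeaves ρ, treeLengthMeasure ρ,
    ⟨hT.treeLengthMeasure_treeLeaves ρ, hlength⟩, ?_⟩
  rintro ν ⟨hν₀, hν⟩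
  rw [← restrict_treeSkeleton_eq_self hν₀,
    ← restrict_treeSkeleton_eq_self (hT.treeLengthMeasure_treeLeaves ρ)]
  exact hT.restrict_treeSkeleton_congr hν hlength
end

section
/- Grafting real trees onto a real tree yields a real tree: let (T,d,ρ) be a rooted real tree, I an index set, (σ_i)_{i∈I} points of T, and for each i ∈ I let (T_i, d_i, ρ_i) be a rooted real tree. Let T' be the disjoint union of T and the sets T_i \ {ρ_i}, i ∈ I, and define d' on T'×T' by: d' = d on T×T; for s ∈ T_i \ {ρ_i} and s' ∈ T, d'(s,s') = d_i(s,ρ_i) + d(σ_i, s'); for s ∈ T_i \ {ρ_i} and s' ∈ T_j \ {ρ_j} with i ≠ j, d'(s,s') = d_i(s,ρ_i) + d(σ_i,σ_j) + d_j(s',ρ_j); and for s,s' ∈ T_i \ {ρ_i}, d'(s,s') = d_i(s,s'). Then (T', d', ρ) is a rooted real tree. -/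
/-- The distance function of an explicitly given metric space structure. -/
noncomputable def mdist {X : Type*} (m : MetricSpace X) : X → X → ℝ :=
  letI := m; dist

open Set Function

section Arcs

variable {X : Type*} [MetricSpace X]

theorem isometry_of_dist_eq_abs {L : ℝ} {f : Icc (0 : ℝ) L → X}
    (h : ∀ u v, dist (f u) (f v) = |(u : ℝ) - v|) : Isometry f :=
  Isometry.of_dist_eq fun u v => by rw [h, Subtype.dist_eq, Real.dist_eq]

namespace arcProp

variable {s t : X} {f : Icc (0 : ℝ) (dist s t) → X}

theorem dist_eq (hf : arcProp s t f) (u v : Icc (0 : ℝ) (dist s t)) :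
    dist (f u) (f v) = |(u : ℝ) - v| := by
  rw [hf.1.dist_eq, Subtype.dist_eq, Real.dist_eq]

theorem dist_left (hf : arcProp s t f) (u : Icc (0 : ℝ) (dist s t)) : dist s (f u) = u := by
  conv_lhs => rw [← hf.2.1]
  rw [hf.dist_eq, zero_sub, abs_neg, abs_of_nonneg u.2.1]

theorem dist_right (hf : arcProp s t f) (u : Icc (0 : ℝ) (dist s t)) :
    dist (f u) t = dist s t - u := by
  conv_lhs => rw [← hf.2.2]
  rw [hf.dist_eq, abs_sub_comm, abs_of_nonneg (sub_nonneg.2 u.2.2)]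

theorem dist_add_dist (hf : arcProp s t f) (u : Icc (0 : ℝ) (dist s t)) :
    dist s (f u) + dist (f u) t = dist s t := by
  rw [hf.dist_left, hf.dist_right, add_sub_cancel]

end arcProp

section Reverse

variable {s t : X}

def revArc (f : Icc (0 : ℝ) (dist s t) → X) : Icc (0 : ℝ) (dist t s) → X :=
  fun u => f ⟨dist s t - u, by
    constructor <;> linarith [u.2.1, u.2.2, dist_comm s t]⟩

theorem arcProp.rev {f : Icc (0 : ℝ) (dist s t) → X} (hf : arcProp s t f) :
    arcProp t s (revArc f) := by
  refine ⟨isometry_of_dist_eq_abs fun u v => ?_, ?_, ?_⟩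
  · rw [revArc, revArc, hf.dist_eq, abs_sub_comm]
    congr 1
    ring
  · exact (congrArg f (Subtype.ext (sub_zero _))).trans hf.2.2
  · exact (congrArg f (Subtype.ext (by simp [dist_comm]))).trans hf.2.1

theorem revArc_revArc (f : Icc (0 : ℝ) (dist s t) → X) : revArc (revArc f) = f :=
  funext fun u => congrArg f (Subtype.ext (by simp [dist_comm]))

theorem range_revArc (f : Icc (0 : ℝ) (dist s t) → X) : range (revArc f) = range f :=
  (range_comp_subset_range _ f).antisymm <| by
    conv_lhs => rw [← revArc_revArc f]
    exact range_comp_subset_range _ _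

end Reverse

section Cut

variable {s p t : X}

def arcLeft (f : Icc (0 : ℝ) (dist s t) → X) (hsum : dist s p + dist p t = dist s t) :
    Icc (0 : ℝ) (dist s p) → X :=
  fun u => f ⟨u, u.2.1, by linarith [u.2.2, dist_nonneg (x := p) (y := t)]⟩

def arcRight (f : Icc (0 : ℝ) (dist s t) → X) (hsum : dist s p + dist p t = dist s t) :
    Icc (0 : ℝ) (dist p t) → X :=
  fun u => f ⟨dist s p + u, by
    constructor <;> linarith [u.2.1, u.2.2, dist_nonneg (x := s) (y := p)]⟩

noncomputable def concatArc (f : Icc (0 : ℝ) (dist s p) → X) (g : Icc (0 : ℝ) (dist p t) → X)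
    (hsum : dist s p + dist p t = dist s t) : Icc (0 : ℝ) (dist s t) → X :=
  fun u => if h : (u : ℝ) ≤ dist s p then f ⟨u, u.2.1, h⟩
    else g ⟨u - dist s p, by constructor <;> linarith [u.2.2]⟩

variable (hsum : dist s p + dist p t = dist s t)
include hsum

theorem arcProp.apply_eq_of_cut {f : Icc (0 : ℝ) (dist s t) → X} (hf : arcProp s t f)
    (hmid : ∀ z, dist s z = dist s p → dist z t = dist p t → z = p)
    (u : Icc (0 : ℝ) (dist s t)) (hu : (u : ℝ) = dist s p) : f u = p :=
  hmid _ (by rw [hf.dist_left, hu]) (by rw [hf.dist_right, hu, ← hsum, add_sub_cancel_left])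

theorem arcProp.arcLeft {f : Icc (0 : ℝ) (dist s t) → X} (hf : arcProp s t f)
    (hp : ∀ u : Icc (0 : ℝ) (dist s t), (u : ℝ) = dist s p → f u = p) :
    arcProp s p (arcLeft f hsum) :=
  ⟨isometry_of_dist_eq_abs fun _ _ => hf.dist_eq _ _, hf.2.1, hp _ rfl⟩

theorem arcProp.arcRight {f : Icc (0 : ℝ) (dist s t) → X} (hf : arcProp s t f)
    (hp : ∀ u : Icc (0 : ℝ) (dist s t), (u : ℝ) = dist s p → f u = p) :
    arcProp p t (arcRight f hsum) := by
  refine ⟨isometry_of_dist_eq_abs fun u v => ?_, hp _ (add_zero _), ?_⟩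
  · exact (hf.dist_eq _ _).trans (by rw [add_sub_add_left_eq_sub])
  · exact (congrArg f (Subtype.ext hsum)).trans hf.2.2

theorem range_arcLeft_union_arcRight (f : Icc (0 : ℝ) (dist s t) → X) :
    range (arcLeft f hsum) ∪ range (arcRight f hsum) = range f := by
  refine union_subset (range_comp_subset_range _ f) (range_comp_subset_range _ f)
    |>.antisymm ?_
  rintro _ ⟨u, rfl⟩
  by_cases hu : (u : ℝ) ≤ dist s p
  · exact Or.inl ⟨⟨u, u.2.1, hu⟩, rfl⟩
  · refine Or.inr ⟨⟨u - dist s p, by constructor <;> linarith [u.2.2]⟩, ?_⟩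
    exact congrArg f (Subtype.ext (add_sub_cancel _ _))

theorem concatArc_arcLeft_arcRight (f : Icc (0 : ℝ) (dist s t) → X) :
    concatArc (arcLeft f hsum) (arcRight f hsum) hsum = f := by
  funext u
  unfold concatArc
  split_ifs
  · rfl
  · exact congrArg f (Subtype.ext (add_sub_cancel _ _))

theorem arcProp.concat {f : Icc (0 : ℝ) (dist s p) → X} {g : Icc (0 : ℝ) (dist p t) → X}
    (hf : arcProp s p f) (hg : arcProp p t g) : arcProp s t (concatArc f g hsum) := by
  have hmixed : ∀ u v, dist (f u) (g v) = dist s p - u + v := fun u v =>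
    le_antisymm
      (by linarith [dist_triangle (f u) p (g v), hf.dist_right u, hg.dist_left v])
      (by linarith [dist_triangle4 s (f u) (g v) t, hf.dist_left u, hg.dist_right v])
  have key : ∀ u v : Icc (0 : ℝ) (dist s t), (u : ℝ) ≤ v →
      dist (concatArc f g hsum u) (concatArc f g hsum v) = v - u := by
    intro u v huv
    unfold concatArc
    split_ifs with hu hv hv
    · rw [hf.dist_eq, abs_sub_comm, abs_of_nonneg (by simpa using huv)]
    · rw [hmixed]; ring
    · linarith
    · rw [hg.dist_eq, abs_sub_comm, abs_of_nonneg (by simp only; linarith)]; ring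
  refine ⟨isometry_of_dist_eq_abs fun u v => ?_, ?_, ?_⟩
  · rcases le_total (u : ℝ) v with h | h
    · rw [key u v h, abs_sub_comm, abs_of_nonneg (by linarith)]
    · rw [dist_comm, key v u h, abs_of_nonneg (by linarith)]
  · simp only [concatArc, dist_nonneg, dif_pos]
    exact hf.2.1
  · unfold concatArc
    split_ifs with h
    · have hpt : p = t := dist_eq_zero.1 (by linarith [dist_nonneg (x := p) (y := t)])
      subst hpt
      exact hf.2.2
    · exact (congrArg g (Subtype.ext (by simp only; linarith))).trans hg.2.2

end Cut

section Map

variable {Z : Type*} [MetricSpace Z] {e : Z → X} {z w : Z}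

def mapArc (he : Isometry e) (g : Icc (0 : ℝ) (dist z w) → Z) :
    Icc (0 : ℝ) (dist (e z) (e w)) → X :=
  fun u => e (g ⟨u, by rw [← he.dist_eq]; exact u.2⟩)

theorem arcProp.map (he : Isometry e) {g : Icc (0 : ℝ) (dist z w) → Z} (hg : arcProp z w g) :
    arcProp (e z) (e w) (mapArc he g) :=
  ⟨isometry_of_dist_eq_abs fun _ _ => (he.dist_eq _ _).trans (hg.dist_eq _ _),
    congrArg e hg.2.1, congrArg e <| (congrArg g (Subtype.ext (he.dist_eq z w))).trans hg.2.2⟩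

theorem range_mapArc (he : Isometry e) (g : Icc (0 : ℝ) (dist z w) → Z) :
    range (mapArc he g) = e '' range g := by
  ext x
  constructor
  · rintro ⟨u, rfl⟩
    exact mem_image_of_mem e (mem_range_self _)
  · rintro ⟨_, ⟨u, rfl⟩, rfl⟩
    exact ⟨⟨u, by rw [he.dist_eq]; exact u.2⟩, rfl⟩

theorem arcProp.exists_eq_mapArc (he : Isometry e) {f : Icc (0 : ℝ) (dist (e z) (e w)) → X}
    (hf : arcProp (e z) (e w) f) (hmem : ∀ u, f u ∈ range e) :
    ∃ g : Icc (0 : ℝ) (dist z w) → Z, arcProp z w g ∧ f = mapArc he g := by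
  choose g hg using hmem
  let g' : Icc (0 : ℝ) (dist z w) → Z := fun u => g ⟨u, by rw [he.dist_eq]; exact u.2⟩
  refine ⟨g', ⟨isometry_of_dist_eq_abs fun u v => ?_, he.injective ?_, he.injective ?_⟩,
    funext fun u => (hg u).symm⟩
  · rw [← he.dist_eq, hg, hg, hf.dist_eq]
  · exact (hg _).trans hf.2.1
  · exact (hg _).trans <| (congrArg f (Subtype.ext (he.dist_eq z w).symm)).trans hf.2.2

end Map

end Arcs

section Paths

theorem Set.Icc.convexComb_injective {a b : ℝ} {x y : Icc a b} (h : x ≠ y) :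
    Injective (Set.Icc.convexComb x y) := by
  intro u v huv
  have hxy : (y : ℝ) - x ≠ 0 := sub_ne_zero.2 fun h' => h (Subtype.ext h'.symm)
  have : ((u : ℝ) - v) * (y - x) = 0 := by
    have := congrArg Subtype.val huv
    simp only [Set.Icc.coe_convexComb] at this
    linarith
  exact Subtype.ext (sub_eq_zero.1 ((mul_eq_zero.1 this).resolve_right hxy))

theorem Set.Icc.range_convexComb {a b : ℝ} {x y : Icc a b} (h : x ≤ y) :
    range (Set.Icc.convexComb x y) = Icc x y := by
  refine (range_subset_iff.2 fun t => mem_Icc.2 ⟨le_convexComb h t, convexComb_le h t⟩).antisymm ?_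
  rintro u ⟨hxu, huy⟩
  rcases h.eq_or_lt with rfl | hlt
  · exact ⟨0, by rw [convexComb_zero]; exact le_antisymm hxu huy⟩
  have hpos : (0 : ℝ) < (y : ℝ) - x := sub_pos.2 (Subtype.coe_lt_coe.2 hlt)
  refine ⟨⟨((u : ℝ) - x) / ((y : ℝ) - x), unitInterval.div_mem (sub_nonneg.2 hxu) hpos.le
    (sub_le_sub_right (Subtype.coe_le_coe.2 huy) _)⟩, Subtype.ext ?_⟩
  simp only [Set.Icc.coe_convexComb]
  field_simp
  ring

theorem range_comp_convexComb_union {α : Type*} (q : unitInterval → α) (c : unitInterval) :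
    range (q ∘ Set.Icc.convexComb 0 c) ∪ range (q ∘ Set.Icc.convexComb c 1) = range q := by
  rw [range_comp, range_comp, Set.Icc.range_convexComb unitInterval.nonneg',
    Set.Icc.range_convexComb unitInterval.le_one', ← image_union, Icc_union_Icc_eq_Icc
      unitInterval.nonneg' unitInterval.le_one', ← unitInterval.univ_eq_Icc, image_univ]

theorem IsPreconnected.inter_frontier_nonempty {α : Type*} [TopologicalSpace α] {s t : Set α}
    (hs : IsPreconnected s) (hin : (s ∩ t).Nonempty) (hout : (s \ t).Nonempty) :
    (s ∩ frontier t).Nonempty := by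
  by_contra hfr
  rw [not_nonempty_iff_eq_empty, ← disjoint_iff_inter_eq_empty] at hfr
  have hcover : s ⊆ interior t ∪ interior tᶜ := fun x hx => by
    have hx' : x ∉ frontier t := hfr.notMem_of_mem_left hx
    rw [frontier, mem_sdiff, not_and_not_right] at hx'
    rw [interior_compl, mem_union, mem_compl_iff]
    tauto
  obtain ⟨x, -, hxt, hxt'⟩ := hs _ _ isOpen_interior isOpen_interior hcover
    (hin.mono fun _ hx => ⟨hx.1, (hcover hx.1).resolve_right fun h =>
      interior_subset h hx.2⟩)
    (hout.mono fun _ hx => ⟨hx.1, (hcover hx.1).resolve_left fun h =>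
      hx.2 (interior_subset h)⟩)
  exact interior_subset hxt' (interior_subset hxt)

end Paths

section TreeLike

variable {X : Type*} [MetricSpace X]

/-- The two axioms of `IsRealTree`, for the endpoints `s` and `t`. -/
structure IsTreeLikePair (s t : X) : Prop where
  existsUnique_arc : ∃! f : Icc (0 : ℝ) (dist s t) → X, arcProp s t f
  range_eq_of_path : ∀ q : unitInterval → X, Continuous q → Injective q → q 0 = s → q 1 = t →
    ∀ f : Icc (0 : ℝ) (dist s t) → X, arcProp s t f → range q = range f

theorem isRealTree_of_forall_isTreeLikePair (h : ∀ s t : X, IsTreeLikePair s t) :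
    IsRealTree X :=
  ⟨fun s t => (h s t).1, fun q hq hqi f hf => (h _ _).2 q hq hqi rfl rfl f hf⟩

theorem IsRealTree.isTreeLikePair (hX : IsRealTree X) (s t : X) : IsTreeLikePair s t :=
  ⟨hX.1 s t, by rintro q hq hqi rfl rfl f hf; exact hX.2 q hq hqi f hf⟩

namespace IsTreeLikePair

variable {s p t : X}

theorem symm (h : IsTreeLikePair s t) : IsTreeLikePair t s := by
  obtain ⟨⟨f, hf, huniq⟩, hpath⟩ := h
  refine ⟨⟨revArc f, hf.rev, fun g hg => ?_⟩, fun q hq hqi hq0 hq1 g hg => ?_⟩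
  · rw [← revArc_revArc g, huniq _ hg.rev]
  · rw [← unitInterval.symm_bijective.surjective.range_comp, ← range_revArc g]
    exact hpath _ (hq.comp unitInterval.continuous_symm)
      (hqi.comp unitInterval.symm_bijective.injective)
      (by simp [unitInterval.symm_zero, hq1]) (by simp [unitInterval.symm_one, hq0]) _ hg.rev

/-- `hmid` forces every arc from `s` to `t` through `p`, and `hhit` every injective path. -/
theorem trans (hsum : dist s p + dist p t = dist s t)
    (hmid : ∀ z, dist s z = dist s p → dist z t = dist p t → z = p) (hsp : s ≠ p) (hpt : p ≠ t)
    (hhit : ∀ q : unitInterval → X, Continuous q → Injective q → q 0 = s → q 1 = t →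
      p ∈ range q)
    (h₁ : IsTreeLikePair s p) (h₂ : IsTreeLikePair p t) : IsTreeLikePair s t := by
  obtain ⟨⟨f₁, hf₁, huniq₁⟩, hpath₁⟩ := h₁
  obtain ⟨⟨f₂, hf₂, huniq₂⟩, hpath₂⟩ := h₂
  refine ⟨⟨concatArc f₁ f₂ hsum, hf₁.concat hsum hf₂, fun f hf => ?_⟩,
    fun q hq hqi hq0 hq1 f hf => ?_⟩
  · have hp := hf.apply_eq_of_cut hsum hmid
    rw [← concatArc_arcLeft_arcRight hsum f, huniq₁ _ (hf.arcLeft hsum hp),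
      huniq₂ _ (hf.arcRight hsum hp)]
  · obtain ⟨c, hc⟩ := hhit q hq hqi hq0 hq1
    have hc0 : (0 : unitInterval) ≠ c := by rintro rfl; exact hsp (hq0.symm.trans hc)
    have hc1 : c ≠ 1 := by rintro rfl; exact hpt (hc.symm.trans hq1)
    have hp := hf.apply_eq_of_cut hsum hmid
    rw [← range_comp_convexComb_union q c, ← range_arcLeft_union_arcRight hsum f,
      hpath₁ _ (hq.comp (Set.Icc.continuous_convexComb _ _))
        (hqi.comp (Set.Icc.convexComb_injective hc0)) (by simp [hq0]) (by simp [hc]) _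
        (hf.arcLeft hsum hp),
      hpath₂ _ (hq.comp (Set.Icc.continuous_convexComb _ _))
        (hqi.comp (Set.Icc.convexComb_injective hc1)) (by simp [hc]) (by simp [hq1]) _
        (hf.arcRight hsum hp)]

end IsTreeLikePair

/-- `P` hangs off the rest of the space at the single point `p`. -/
def IsBranchAt (P : Set X) (p : X) : Prop :=
  p ∉ P ∧ ∀ x ∈ P, ∀ y ∉ P, dist x y = dist x p + dist p y

namespace IsBranchAt

variable {P : Set X} {p : X} (hP : IsBranchAt P p)
include hP

theorem dist_pos {x : X} (hx : x ∈ P) : 0 < dist x p :=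
  _root_.dist_pos.2 (ne_of_mem_of_not_mem hx hP.1)

theorem isOpen : IsOpen P :=
  Metric.isOpen_iff.2 fun x hx => ⟨dist x p, hP.dist_pos hx, fun y hy => by
    by_contra hyP
    rw [Metric.mem_ball, dist_comm, hP.2 x hx y hyP] at hy
    linarith [dist_nonneg (x := p) (y := y)]⟩

theorem frontier_subset : frontier P ⊆ {p} := by
  intro y hy
  rw [hP.isOpen.frontier_eq] at hy
  by_contra hyp
  obtain ⟨x, hx, hxy⟩ := Metric.mem_closure_iff.1 hy.1 _ (_root_.dist_pos.2 (Ne.symm hyp))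
  rw [dist_comm, hP.2 x hx y hy.2, dist_comm p y] at hxy
  linarith [hP.dist_pos hx]

theorem compl_insert : IsBranchAt (insert p P)ᶜ p := by
  refine ⟨fun h => h (mem_insert p P), fun x hx y hy => ?_⟩
  rw [notMem_compl_iff, mem_insert_iff] at hy
  rcases hy with rfl | hy
  · rw [dist_self, add_zero]
  · rw [dist_comm, hP.2 y hy x fun h => hx (mem_insert_of_mem p h), add_comm, dist_comm x,
      dist_comm y]

theorem notMem_of_dist_add_dist_eq {s t x : X} (hs : s ∉ P) (ht : t ∉ P)
    (hx : dist s x + dist x t = dist s t) : x ∉ P := fun hxP => by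
  have h₁ := hP.2 x hxP s hs
  have h₂ := hP.2 x hxP t ht
  rw [dist_comm] at h₁
  linarith [dist_triangle s p t, hP.dist_pos hxP, dist_comm p s, dist_comm x s]

theorem eq_of_dist_eq {s t z : X} (hs : s ∈ P) (ht : t ∉ P) (hz₁ : dist s z = dist s p)
    (hz₂ : dist z t = dist p t) : z = p := by
  by_cases hz : z ∈ P
  · linarith [hP.2 z hz t ht, hP.dist_pos hz]
  · exact (dist_eq_zero.1 (by linarith [hP.2 s hs z hz])).symm

theorem exists_apply_eq {q : unitInterval → X} (hq : Continuous q) {a b : unitInterval}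
    (hin : ∃ u ∈ Icc a b, q u ∈ P) (hout : ∃ v ∈ Icc a b, q v ∉ P) :
    ∃ c ∈ Icc a b, q c = p := by
  obtain ⟨u, hu, hqu⟩ := hin
  obtain ⟨v, hv, hqv⟩ := hout
  obtain ⟨_, ⟨c, hc, rfl⟩, hfr⟩ :=
    (isPreconnected_Icc.image q hq.continuousOn).inter_frontier_nonempty
      ⟨q u, mem_image_of_mem q hu, hqu⟩ ⟨q v, mem_image_of_mem q hv, hqv⟩
  exact ⟨c, hc, hP.frontier_subset hfr⟩

/-- A path can only enter or leave `P` through `p`, which an injective path visits once. -/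
theorem apply_notMem {q : unitInterval → X} (hq : Continuous q) (hqi : Injective q)
    (h0 : q 0 ∉ P) (h1 : q 1 ∉ P) (u : unitInterval) : q u ∉ P := fun hu => by
  obtain ⟨c₁, hc₁, hq₁⟩ := hP.exists_apply_eq hq ⟨u, ⟨unitInterval.nonneg', le_rfl⟩, hu⟩
    ⟨0, ⟨le_rfl, unitInterval.nonneg'⟩, h0⟩
  obtain ⟨c₂, hc₂, hq₂⟩ := hP.exists_apply_eq hq ⟨u, ⟨le_rfl, unitInterval.le_one'⟩, hu⟩
    ⟨1, ⟨unitInterval.le_one', le_rfl⟩, h1⟩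
  have hc : c₁ = c₂ := hqi (hq₁.trans hq₂.symm)
  have hcu : c₁ = u := le_antisymm hc₁.2 (hc ▸ hc₂.1)
  exact hP.1 (hq₁ ▸ hcu ▸ hu)

theorem isTreeLikePair {s t : X} (hs : s ∈ P) (ht : t ∉ P) (h₁ : IsTreeLikePair s p)
    (h₂ : IsTreeLikePair p t) : IsTreeLikePair s t := by
  by_cases hpt : p = t
  · exact hpt ▸ h₁
  refine h₁.trans (hP.2 s hs t ht).symm (fun z => hP.eq_of_dist_eq hs ht)
    (ne_of_mem_of_not_mem hs hP.1) hpt (fun q hq _ hq0 hq1 => ?_) h₂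
  obtain ⟨c, -, hc⟩ := hP.exists_apply_eq hq (a := 0) (b := 1)
    ⟨0, ⟨le_rfl, unitInterval.nonneg'⟩, hq0 ▸ hs⟩ ⟨1, ⟨unitInterval.le_one', le_rfl⟩, hq1 ▸ ht⟩
  exact ⟨c, hc⟩

end IsBranchAt

/-- Branches missing `range e` contain no point of an arc or an injective path between points of
`range e`, so these live in the real tree `Z`. -/
theorem isTreeLikePair_of_isometry {Z : Type*} [MetricSpace Z] {e : Z → X} (he : Isometry e)
    (hZ : IsRealTree Z)
    (hsep : ∀ x ∉ range e, ∃ (P : Set X) (p : X), IsBranchAt P p ∧ x ∈ P ∧ Disjoint (range e) P)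
    {s t : X} (hs : s ∈ range e) (ht : t ∈ range e) : IsTreeLikePair s t := by
  have hmem : ∀ x, (∀ P p, IsBranchAt P p → Disjoint (range e) P → x ∉ P) → x ∈ range e :=
    fun x hx => by_contra fun h => by
      obtain ⟨P, p, hP, hxP, hdisj⟩ := hsep x h
      exact hx P p hP hdisj hxP
  obtain ⟨z, rfl⟩ := hs
  obtain ⟨w, rfl⟩ := ht
  have harc : ∀ f, arcProp (e z) (e w) f → ∃ g, arcProp z w g ∧ f = mapArc he g :=
    fun f hf => hf.exists_eq_mapArc he fun u => hmem _ fun P p hP hdisj =>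
      hP.notMem_of_dist_add_dist_eq (hdisj.notMem_of_mem_left (mem_range_self z))
        (hdisj.notMem_of_mem_left (mem_range_self w)) (hf.dist_add_dist u)
  obtain ⟨⟨g, hg, huniq⟩, hpath⟩ := hZ.isTreeLikePair z w
  refine ⟨⟨mapArc he g, hg.map he, fun f hf => ?_⟩, fun q hq hqi hq0 hq1 f hf => ?_⟩
  · obtain ⟨g', hg', rfl⟩ := harc f hf
    rw [huniq g' hg']
  · choose r hr using fun v => hmem (q v) fun P p hP hdisj =>
      hP.apply_notMem hq hqi (hq0 ▸ hdisj.notMem_of_mem_left (mem_range_self z))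
        (hq1 ▸ hdisj.notMem_of_mem_left (mem_range_self w)) v
    have hrq : e ∘ r = q := funext hr
    have hrc : Continuous r := by rw [he.isEmbedding.continuous_iff, hrq]; exact hq
    obtain ⟨g', hg', rfl⟩ := harc f hf
    rw [range_mapArc, ← hrq, range_comp, hpath r hrc (fun a b h => hqi (by rw [← hr, ← hr, h]))
      (he.injective ((hr 0).trans hq0)) (he.injective ((hr 1).trans hq1)) g' hg']

theorem IsRealTree.of_isBranchAt {ι : Type*} {p : ι → X} {P : ι → Set X}
    (hP : ∀ i, IsBranchAt (P i) (p i)) {Z₀ : Type*} [MetricSpace Z₀] {e₀ : Z₀ → X}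
    (he₀ : Isometry e₀) (hZ₀ : IsRealTree Z₀) (hrange₀ : range e₀ = (⋃ i, P i)ᶜ)
    (hp : ∀ i, p i ∈ range e₀) {Z : ι → Type*} [∀ i, MetricSpace (Z i)] {e : ∀ i, Z i → X}
    (he : ∀ i, Isometry (e i)) (hZ : ∀ i, IsRealTree (Z i))
    (hrange : ∀ i, range (e i) = insert (p i) (P i)) : IsRealTree X := by
  have hbase : ∀ s ∈ range e₀, ∀ t ∈ range e₀, IsTreeLikePair s t :=
    fun s hs t ht => isTreeLikePair_of_isometry he₀ hZ₀ (fun x hx => by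
      rw [hrange₀, notMem_compl_iff, mem_iUnion] at hx
      obtain ⟨i, hi⟩ := hx
      exact ⟨P i, p i, hP i, hi, hrange₀ ▸ disjoint_compl_left_iff_subset.2 (subset_iUnion P i)⟩)
      hs ht
  have hbranch : ∀ i, ∀ s ∈ insert (p i) (P i), ∀ t ∈ insert (p i) (P i), IsTreeLikePair s t :=
    fun i s hs t ht => isTreeLikePair_of_isometry (he i) (hZ i)
      (fun x hx => ⟨_, p i, (hP i).compl_insert, hrange i ▸ hx, hrange i ▸ disjoint_compl_right⟩)
      (hrange i ▸ hs) (hrange i ▸ ht)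
  have hnotMem : ∀ {t} i, t ∈ range e₀ → t ∉ P i := fun i ht h =>
    (hrange₀ ▸ ht) (mem_iUnion_of_mem i h)
  have hfromBase : ∀ s ∈ range e₀, ∀ t, IsTreeLikePair s t := by
    intro s hs t
    by_cases ht : t ∈ range e₀
    · exact hbase s hs t ht
    rw [hrange₀, notMem_compl_iff, mem_iUnion] at ht
    obtain ⟨i, hi⟩ := ht
    exact ((hP i).isTreeLikePair hi (hnotMem i hs) (hbranch i t (mem_insert_of_mem _ hi) (p i)
      (mem_insert _ _)) (hbase (p i) (hp i) s hs)).symm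
  refine isRealTree_of_forall_isTreeLikePair fun s t => ?_
  by_cases hs : s ∈ range e₀
  · exact hfromBase s hs t
  rw [hrange₀, notMem_compl_iff, mem_iUnion] at hs
  obtain ⟨i, hi⟩ := hs
  by_cases ht : t ∈ insert (p i) (P i)
  · exact hbranch i s (mem_insert_of_mem _ hi) t ht
  exact (hP i).isTreeLikePair hi (fun h => ht (mem_insert_of_mem _ h))
    (hbranch i s (mem_insert_of_mem _ hi) (p i) (mem_insert _ _)) (hfromBase (p i) (hp i) t)

end TreeLike

section Graft

variable {T : Type*} {I : Type*} {Ti : I → Type*}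

/-- The grafted space. The grafting points `σ` are recorded in the type so that its metric
instance can depend on them. -/
def GraftSpace (_σ : I → T) (ρi : ∀ i, Ti i) : Type _ :=
  T ⊕ Σ i, {x : Ti i // x ≠ ρi i}

namespace GraftSpace

variable {σ : I → T} {ρi : ∀ i, Ti i}

def foot : GraftSpace σ ρi → T
  | Sum.inl a => a
  | Sum.inr ⟨i, _⟩ => σ i

def SameBranch (z w : GraftSpace σ ρi) : Prop :=
  ∃ i, ∃ x y : {x : Ti i // x ≠ ρi i}, z = Sum.inr ⟨i, x⟩ ∧ w = Sum.inr ⟨i, y⟩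

theorem SameBranch.symm {z w : GraftSpace σ ρi} (h : SameBranch z w) : SameBranch w z :=
  let ⟨i, x, y, hz, hw⟩ := h
  ⟨i, y, x, hw, hz⟩

def baseEmb (a : T) : GraftSpace σ ρi := Sum.inl a

theorem not_sameBranch_baseEmb (a : T) (w : GraftSpace σ ρi) : ¬SameBranch (baseEmb a) w := by
  rintro ⟨i, x, y, h, -⟩
  cases h

def branchSet (i : I) : Set (GraftSpace σ ρi) :=
  range fun x : {x : Ti i // x ≠ ρi i} => Sum.inr ⟨i, x⟩

open Classical in
noncomputable def branchEmb (i : I) (x : Ti i) : GraftSpace σ ρi :=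
  if h : x = ρi i then Sum.inl (σ i) else Sum.inr ⟨i, x, h⟩

theorem branchEmb_root (i : I) : branchEmb (σ := σ) (ρi := ρi) i (ρi i) = baseEmb (σ i) :=
  dif_pos rfl

theorem branchEmb_of_ne {i : I} {x : Ti i} (hx : x ≠ ρi i) :
    branchEmb (σ := σ) i x = Sum.inr ⟨i, x, hx⟩ :=
  dif_neg hx

theorem range_baseEmb : range (baseEmb : T → GraftSpace σ ρi) = (⋃ i, branchSet i)ᶜ := by
  ext z
  constructor
  · rintro ⟨a, rfl⟩ hmem
    obtain ⟨i, x, hx⟩ := mem_iUnion.1 hmem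
    exact Sum.inr_ne_inl hx
  · intro hz
    rcases z with a | ⟨i, x⟩
    · exact ⟨a, rfl⟩
    · exact (hz (mem_iUnion.2 ⟨i, x, rfl⟩)).elim

theorem range_branchEmb (i : I) :
    range (branchEmb (σ := σ) (ρi := ρi) i) = insert (baseEmb (σ i)) (branchSet i) := by
  ext z
  constructor
  · rintro ⟨x, rfl⟩
    by_cases hx : x = ρi i
    · rw [hx, branchEmb_root]
      exact mem_insert _ _
    · rw [branchEmb_of_ne hx]
      exact mem_insert_of_mem _ ⟨⟨x, hx⟩, rfl⟩
  · rintro (rfl | ⟨x, rfl⟩)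
    · exact ⟨ρi i, branchEmb_root i⟩
    · exact ⟨x, branchEmb_of_ne x.2⟩

variable [∀ i, MetricSpace (Ti i)]

def height : GraftSpace σ ρi → ℝ
  | Sum.inl _ => 0
  | Sum.inr ⟨i, x⟩ => dist (x : Ti i) (ρi i)

theorem height_nonneg (z : GraftSpace σ ρi) : 0 ≤ height z := by
  rcases z with a | ⟨i, x⟩
  exacts [le_rfl, dist_nonneg]

theorem eq_baseEmb_of_height_eq_zero {z : GraftSpace σ ρi} (h : height z = 0) :
    z = baseEmb (foot z) := by
  rcases z with a | ⟨i, x⟩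
  · rfl
  · exact absurd (dist_eq_zero.1 h) x.2

variable [MetricSpace T]

open Classical in
noncomputable def graftDist : GraftSpace σ ρi → GraftSpace σ ρi → ℝ
  | Sum.inl a, Sum.inl b => dist a b
  | Sum.inl a, Sum.inr ⟨j, y⟩ => dist a (σ j) + dist (y : Ti j) (ρi j)
  | Sum.inr ⟨i, x⟩, Sum.inl b => dist (x : Ti i) (ρi i) + dist (σ i) b
  | Sum.inr ⟨i, x⟩, Sum.inr ⟨j, y⟩ =>
    if h : i = j then dist (x : Ti i) (cast (congrArg Ti h.symm) (y : Ti j))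
    else dist (x : Ti i) (ρi i) + dist (σ i) (σ j) + dist (y : Ti j) (ρi j)

theorem graftDist_inr_inr_self (i : I) (x y : {x : Ti i // x ≠ ρi i}) :
    graftDist (σ := σ) (Sum.inr ⟨i, x⟩) (Sum.inr ⟨i, y⟩) = dist (x : Ti i) y := by
  simp [graftDist]

theorem graftDist_inr_inr_of_ne {i j : I} (hij : i ≠ j) (x : {x : Ti i // x ≠ ρi i})
    (y : {x : Ti j // x ≠ ρi j}) :
    graftDist (σ := σ) (Sum.inr ⟨i, x⟩) (Sum.inr ⟨j, y⟩)
      = dist (x : Ti i) (ρi i) + dist (σ i) (σ j) + dist (y : Ti j) (ρi j) := by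
  simp [graftDist, hij]

theorem graftDist_of_not_sameBranch {z w : GraftSpace σ ρi} (h : ¬SameBranch z w) :
    graftDist z w = height z + dist (foot z) (foot w) + height w := by
  rcases z with a | ⟨i, x⟩ <;> rcases w with b | ⟨j, y⟩
  · simp [graftDist, height, foot]
  · simp [graftDist, height, foot]
  · simp [graftDist, height, foot]
  · have hij : i ≠ j := by rintro rfl; exact h ⟨i, x, y, rfl, rfl⟩
    rw [graftDist_inr_inr_of_ne hij]
    rfl

theorem graftDist_self (z : GraftSpace σ ρi) : graftDist z z = 0 := by
  rcases z with a | ⟨i, x⟩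
  · exact dist_self a
  · rw [graftDist_inr_inr_self, dist_self]

theorem graftDist_le (z w : GraftSpace σ ρi) :
    graftDist z w ≤ height z + dist (foot z) (foot w) + height w := by
  by_cases h : SameBranch z w
  · obtain ⟨i, x, y, rfl, rfl⟩ := h
    simpa [graftDist_inr_inr_self, height, foot] using dist_triangle_right _ _ (ρi i)
  · exact (graftDist_of_not_sameBranch h).le

theorem height_add_dist_foot_le (z w : GraftSpace σ ρi) :
    height z + dist (foot z) (foot w) ≤ graftDist z w + height w := by
  by_cases h : SameBranch z w
  · obtain ⟨i, x, y, rfl, rfl⟩ := h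
    simpa [graftDist_inr_inr_self, height, foot] using dist_triangle _ (y : Ti i) (ρi i)
  · rw [graftDist_of_not_sameBranch h]
    linarith [height_nonneg w]

theorem graftDist_comm (z w : GraftSpace σ ρi) : graftDist z w = graftDist w z := by
  by_cases h : SameBranch z w
  · obtain ⟨i, x, y, rfl, rfl⟩ := h
    rw [graftDist_inr_inr_self, graftDist_inr_inr_self, dist_comm]
  · rw [graftDist_of_not_sameBranch h, graftDist_of_not_sameBranch (mt SameBranch.symm h),
      dist_comm]
    ring

theorem graftDist_triangle (x y z : GraftSpace σ ρi) :
    graftDist x z ≤ graftDist x y + graftDist y z := by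
  have hxz := graftDist_le x z
  have hfoot := dist_triangle (foot x) (foot y) (foot z)
  by_cases hxy : SameBranch x y <;> by_cases hyz : SameBranch y z
  · obtain ⟨i, a, b, rfl, rfl⟩ := hxy
    obtain ⟨j, b', c, hb, rfl⟩ := hyz
    cases hb
    simp only [graftDist_inr_inr_self]
    exact dist_triangle _ _ _
  · linarith [height_add_dist_foot_le x y, graftDist_of_not_sameBranch hyz]
  · linarith [height_add_dist_foot_le z y, graftDist_of_not_sameBranch hxy, graftDist_comm z y,
      dist_comm (foot z) (foot y)]
  · linarith [graftDist_of_not_sameBranch hxy, graftDist_of_not_sameBranch hyz,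
      height_nonneg y]

theorem eq_of_graftDist_eq_zero {z w : GraftSpace σ ρi} (h : graftDist z w = 0) : z = w := by
  by_cases hzw : SameBranch z w
  · obtain ⟨i, x, y, rfl, rfl⟩ := hzw
    rw [graftDist_inr_inr_self, dist_eq_zero] at h
    rw [Subtype.ext h]
  · rw [graftDist_of_not_sameBranch hzw] at h
    have := height_nonneg z
    have := height_nonneg w
    have := dist_nonneg (x := foot z) (y := foot w)
    have hz : height z = 0 := by linarith
    have hw : height w = 0 := by linarith
    have hfoot : foot z = foot w := dist_eq_zero.1 (by linarith)
    rw [eq_baseEmb_of_height_eq_zero hz, eq_baseEmb_of_height_eq_zero hw, hfoot]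

noncomputable instance : MetricSpace (GraftSpace σ ρi) where
  dist := graftDist
  dist_self := graftDist_self
  dist_comm := graftDist_comm
  dist_triangle := graftDist_triangle
  eq_of_dist_eq_zero := eq_of_graftDist_eq_zero

theorem dist_of_not_sameBranch {z w : GraftSpace σ ρi} (h : ¬SameBranch z w) :
    dist z w = height z + dist (foot z) (foot w) + height w :=
  graftDist_of_not_sameBranch h

theorem isometry_baseEmb : Isometry (baseEmb : T → GraftSpace σ ρi) :=
  Isometry.of_dist_eq fun _ _ => rfl

theorem isometry_branchEmb (i : I) : Isometry (branchEmb (σ := σ) (ρi := ρi) i) := by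
  refine Isometry.of_dist_eq fun x y => ?_
  by_cases hx : x = ρi i <;> by_cases hy : y = ρi i
  · rw [hx, hy, branchEmb_root, dist_self, dist_self]
  · rw [hx, branchEmb_root, branchEmb_of_ne hy]
    change dist (σ i) (σ i) + dist y (ρi i) = _
    rw [dist_self, zero_add, dist_comm]
  · rw [hy, branchEmb_root, branchEmb_of_ne hx]
    change dist x (ρi i) + dist (σ i) (σ i) = _
    rw [dist_self, add_zero]
  · rw [branchEmb_of_ne hx, branchEmb_of_ne hy]
    exact graftDist_inr_inr_self i ⟨x, hx⟩ ⟨y, hy⟩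

theorem isBranchAt_branchSet (i : I) :
    IsBranchAt (branchSet (σ := σ) (ρi := ρi) i) (baseEmb (σ i)) := by
  refine ⟨fun ⟨x, hx⟩ => Sum.inr_ne_inl hx, fun z hz w hw => ?_⟩
  have hzw : ¬SameBranch z w := by
    rintro ⟨j, x, y, rfl, rfl⟩
    obtain ⟨x', hx'⟩ := hz
    cases hx'
    exact hw ⟨y, rfl⟩
  have hfoot : foot z = σ i := by
    obtain ⟨x, rfl⟩ := hz
    rfl
  rw [dist_of_not_sameBranch hzw, dist_of_not_sameBranch (mt SameBranch.symm
    (not_sameBranch_baseEmb _ _)), dist_of_not_sameBranch (not_sameBranch_baseEmb _ _), hfoot]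
  simp only [baseEmb, height, foot, dist_self]
  ring

theorem isRealTree (hT : IsRealTree T) (hTi : ∀ i, IsRealTree (Ti i)) :
    IsRealTree (GraftSpace σ ρi) :=
  IsRealTree.of_isBranchAt isBranchAt_branchSet isometry_baseEmb hT range_baseEmb
    (fun i => mem_range_self (σ i)) isometry_branchEmb hTi range_branchEmb

end GraftSpace

end Graft

theorem graft_isRealTree_general (T : Type*) [MetricSpace T] (hT : IsRealTree T)
    {I : Type*} (σ : I → T) (Ti : I → Type*) [∀ i, MetricSpace (Ti i)] (ρi : ∀ i, Ti i)
    (hTi : ∀ i, IsRealTree (Ti i)) :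
    ∃ m : MetricSpace (T ⊕ (Σ i : I, {x : Ti i // x ≠ ρi i})),
      (∀ s s' : T, mdist m (Sum.inl s) (Sum.inl s') = dist s s') ∧
      (∀ (i : I) (s : {x : Ti i // x ≠ ρi i}) (s' : T),
        mdist m (Sum.inr ⟨i, s⟩) (Sum.inl s') = dist (s : Ti i) (ρi i) + dist (σ i) s') ∧
      (∀ i j : I, i ≠ j → ∀ (s : {x : Ti i // x ≠ ρi i}) (s' : {x : Ti j // x ≠ ρi j}),
        mdist m (Sum.inr ⟨i, s⟩) (Sum.inr ⟨j, s'⟩)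
          = dist (s : Ti i) (ρi i) + dist (σ i) (σ j) + dist (s' : Ti j) (ρi j)) ∧
      (∀ (i : I) (s s' : {x : Ti i // x ≠ ρi i}),
        mdist m (Sum.inr ⟨i, s⟩) (Sum.inr ⟨i, s'⟩) = dist (s : Ti i) (s' : Ti i)) ∧
      @IsRealTree _ m :=
  ⟨(inferInstance : MetricSpace (GraftSpace σ ρi)), fun _ _ => rfl, fun _ _ _ => rfl,
    fun _ _ hij => GraftSpace.graftDist_inr_inr_of_ne hij, GraftSpace.graftDist_inr_inr_self,
    GraftSpace.isRealTree (σ := σ) (ρi := ρi) hT hTi⟩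

/-- Grafting real trees onto a real tree yields a real tree: the disjoint union
`T ⊔ ⨆ᵢ (Tᵢ \ {ρᵢ})` carries a metric space structure, given by the grafting formulas, which
makes it a rooted real tree (rooted at the root of `T`). -/
theorem graft_isRealTree (T : Type*) [MetricSpace T] (ρ : T) (hT : IsRealTree T)
    {I : Type*} (σ : I → T) (Ti : I → Type*) [∀ i, MetricSpace (Ti i)] (ρi : ∀ i, Ti i)
    (hTi : ∀ i, IsRealTree (Ti i)) :
    ∃ m : MetricSpace (T ⊕ (Σ i : I, {x : Ti i // x ≠ ρi i})),
      (∀ s s' : T, mdist m (Sum.inl s) (Sum.inl s') = dist s s') ∧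
      (∀ (i : I) (s : {x : Ti i // x ≠ ρi i}) (s' : T),
        mdist m (Sum.inr ⟨i, s⟩) (Sum.inl s') = dist (s : Ti i) (ρi i) + dist (σ i) s') ∧
      (∀ i j : I, i ≠ j → ∀ (s : {x : Ti i // x ≠ ρi i}) (s' : {x : Ti j // x ≠ ρi j}),
        mdist m (Sum.inr ⟨i, s⟩) (Sum.inr ⟨j, s'⟩)
          = dist (s : Ti i) (ρi i) + dist (σ i) (σ j) + dist (s' : Ti j) (ρi j)) ∧
      (∀ (i : I) (s s' : {x : Ti i // x ≠ ρi i}),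
        mdist m (Sum.inr ⟨i, s⟩) (Sum.inr ⟨i, s'⟩) = dist (s : Ti i) (s' : Ti i)) ∧
      @IsRealTree _ m :=
  graft_isRealTree_general T hT σ Ti ρi hTi
end

section
/- Let ψ be a branching mechanism and let q > 0 with λ := ψ(q) > 0. Then ψ'(q) > 0, and the numbers ξ_λ(0) = λ/(q ψ'(q)), ξ_λ(1) = 0, and ξ_λ(k) = q^{k−1} |ψ^{(k)}(q)| / (k! ψ'(q)) for k ≥ 2, are nonnegative, satisfy Σ_{k≥0} ξ_λ(k) = 1 (in particular the series Σ_{k≥2} q^k |ψ^{(k)}(q)|/k! converges), and the generating function of ξ_λ is φ_λ(s) = Σ_{k≥0} ξ_λ(k) s^k = s + ψ((1−s)q)/(q ψ'(q)) for every s ∈ [0,1]. -/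
/-!
Differentiating under the integral sign, `ψ^{(k)}(q) = (-1)^k ∫ x^k e^{-qx} ν(dx)` for `k ≥ 3`,
and `ψ''(q) = 2β + ∫ x² e^{-qx} ν(dx)`, so `(-1)^k ψ^{(k)}(q) = |ψ^{(k)}(q)|` for `k ≥ 2`.
Expanding `e^{tx}` in the identity
`ψ(q - t) - ψ(q) + t ψ'(q) = β t² + ∫ e^{-qx} (e^{tx} - 1 - tx) ν(dx)` and exchanging sum and
integral (all terms are nonnegative) gives, for `0 ≤ t ≤ q`,
`ψ(q - t) = ψ(q) - t ψ'(q) + Σ_{k ≥ 2} t^k |ψ^{(k)}(q)| / k!`.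
With `t = sq` and division by `q ψ'(q)` this is the generating function identity. At `t = q` it
gives `q ψ'(q) ≥ ψ(q) > 0` because `ψ(0) = 0`, and at `s = 1` the total mass `1`.
-/

open MeasureTheory

/-- `ψ` is a branching mechanism with parameters `(α, β, ν)`:
`ψ(c) = αc + βc² + ∫ (e^{-cx} - 1 + cx 1_{x<1}) ν(dx)` for all `c ≥ 0`, where `β ≥ 0` and
`ν` is a measure on `(0,∞)` with `∫ min(1,x²) ν(dx) < ∞`. -/
def IsBMWith (ψ : ℝ → ℝ) (α β : ℝ) (ν : Measure ℝ) : Prop :=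
  0 ≤ β ∧ ν (Set.Iic 0) = 0 ∧ (∫⁻ x, ENNReal.ofReal (min 1 (x ^ 2)) ∂ν) < ⊤ ∧
    ∀ c : ℝ, 0 ≤ c →
      ψ c = α * c + β * c ^ 2
        + ∫ x, (Real.exp (-(c * x)) - 1 + (if x < 1 then c * x else 0)) ∂ν

/-- `ψ` is a branching mechanism: it is of Lévy–Khintchine form for some parameters. -/
def IsBranchingMechanism (ψ : ℝ → ℝ) : Prop :=
  ∃ (α β : ℝ) (ν : Measure ℝ), IsBMWith ψ α β ν

/-- The offspring distribution `ξ_λ` associated with a branching mechanism `ψ` at `q = ψ^{-1}(λ)`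
(so that `λ = ψ(q)`). -/
noncomputable def xiL (ψ : ℝ → ℝ) (q : ℝ) : ℕ → ℝ
  | 0 => ψ q / (q * derivWithin ψ (Set.Ioi 0) q)
  | 1 => 0
  | (k + 2) => q ^ (k + 1) * |iteratedDerivWithin (k + 2) ψ (Set.Ioi 0) q| /
      ((Nat.factorial (k + 2) : ℝ) * derivWithin ψ (Set.Ioi 0) q)

open Real Filter Topology Set
open scoped Nat

/-- The `n`-th derivative in `c` of the Lévy–Khintchine integrand `e^{-cx} - 1 + cx 1_{x<1}`. -/
noncomputable def levyKernel : ℕ → ℝ → ℝ → ℝ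
  | 0, c, x => exp (-(c * x)) - 1 + if x < 1 then c * x else 0
  | 1, c, x => (if x < 1 then x else 0) - x * exp (-(c * x))
  | n + 2, c, x => (-1) ^ n * (x ^ (n + 2) * exp (-(c * x)))

def levyPoly (α β : ℝ) : ℕ → ℝ → ℝ
  | 0, c => α * c + β * c ^ 2
  | 1, c => α + 2 * β * c
  | 2, _ => 2 * β
  | _ + 3, _ => 0

/-- The `n`-th derivative on `(0, ∞)` of `c ↦ αc + βc² + ∫ (e^{-cx} - 1 + cx 1_{x<1}) ν(dx)`. -/
noncomputable def lkDeriv (α β : ℝ) (ν : Measure ℝ) (n : ℕ) (c : ℝ) : ℝ :=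
  levyPoly α β n c + ∫ x, levyKernel n c x ∂ν

lemma hasDerivAt_levyPoly (α β : ℝ) (n : ℕ) (c : ℝ) :
    HasDerivAt (levyPoly α β n) (levyPoly α β (n + 1) c) c := by
  match n with
  | 0 =>
    exact (((hasDerivAt_id c).const_mul α).add ((hasDerivAt_pow 2 c).const_mul β)).congr_deriv
      (by simp only [levyPoly]; ring)
  | 1 =>
    exact (((hasDerivAt_id c).const_mul (2 * β)).const_add α).congr_deriv
      (by simp only [levyPoly]; ring)
  | 2 => exact hasDerivAt_const c (2 * β)
  | n + 3 => exact hasDerivAt_const c 0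

lemma hasDerivAt_exp_neg_mul (x c : ℝ) :
    HasDerivAt (fun c => exp (-(c * x))) (-(x * exp (-(c * x)))) c := by
  have h : HasDerivAt (fun c => -(c * x)) (-x) c := (hasDerivAt_mul_const x).neg
  exact h.exp.congr_deriv (by ring)

lemma hasDerivAt_levyKernel (n : ℕ) (x c : ℝ) :
    HasDerivAt (levyKernel n · x) (levyKernel (n + 1) c x) c := by
  have he := hasDerivAt_exp_neg_mul x c
  match n with
  | 0 =>
    have hK : (levyKernel 0 · x) = fun c => exp (-(c * x)) - 1 + c * if x < 1 then x else 0 := by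
      funext c; simp only [levyKernel]; split_ifs <;> ring
    rw [hK]
    exact ((he.sub_const 1).add (hasDerivAt_mul_const _)).congr_deriv
      (by simp only [levyKernel]; ring)
  | 1 =>
    exact ((hasDerivAt_const c _).sub (he.const_mul x)).congr_deriv
      (by simp only [levyKernel]; ring)
  | n + 2 =>
    exact ((he.const_mul (x ^ (n + 2))).const_mul ((-1) ^ n)).congr_deriv
      (by show _ = (-1) ^ (n + 1) * (x ^ (n + 1 + 2) * exp (-(c * x))); ring)

lemma measurable_levyKernel (n : ℕ) (c : ℝ) : Measurable (levyKernel n c) := by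
  match n with
  | 0 =>
    exact (by fun_prop : Measurable fun x => exp (-(c * x)) - 1).add
      (Measurable.ite measurableSet_Iio (by fun_prop) measurable_const)
  | 1 =>
    exact (Measurable.ite measurableSet_Iio measurable_id measurable_const).sub (by fun_prop)
  | n + 2 =>
    exact (by fun_prop : Measurable fun x => (-1) ^ n * (x ^ (n + 2) * exp (-(c * x))))

lemma abs_exp_neg_sub_one_add_le_sq {t : ℝ} (ht : 0 ≤ t) : |exp (-t) - 1 + t| ≤ t ^ 2 := by
  rcases le_total t 1 with ht1 | ht1
  · simpa [sub_neg_eq_add, abs_of_nonneg ht] using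
      abs_exp_sub_one_sub_id_le (x := -t) (by rwa [abs_neg, abs_of_nonneg ht])
  · have h0 : 0 ≤ exp (-t) - 1 + t := by linarith [add_one_le_exp (-t)]
    have h1 : exp (-t) ≤ 1 := exp_le_one_iff.mpr (by linarith)
    rw [abs_of_nonneg h0]
    nlinarith

lemma pow_mul_exp_neg_le {a x : ℝ} (ha : 0 < a) (hx : 0 ≤ x) (k : ℕ) :
    x ^ k * exp (-(a * x)) ≤ k ! / a ^ k := by
  have h := pow_div_factorial_le_exp (a * x) (by positivity) k
  rw [div_le_iff₀ (by positivity), mul_pow] at h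
  rw [le_div_iff₀ (by positivity), exp_neg]
  calc x ^ k * (exp (a * x))⁻¹ * a ^ k = a ^ k * x ^ k * (exp (a * x))⁻¹ := by ring
    _ ≤ exp (a * x) * k ! * (exp (a * x))⁻¹ := by gcongr
    _ = k ! := by field_simp

lemma abs_levyKernel_zero_le {c x : ℝ} (hc : 0 ≤ c) (hx : 0 < x) :
    |levyKernel 0 c x| ≤ max 1 (c ^ 2) * min 1 (x ^ 2) := by
  simp only [levyKernel]
  rcases lt_or_ge x 1 with hx1 | hx1
  · rw [if_pos hx1, min_eq_right (by nlinarith)]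
    calc |exp (-(c * x)) - 1 + c * x| ≤ (c * x) ^ 2 := abs_exp_neg_sub_one_add_le_sq (by positivity)
      _ = c ^ 2 * x ^ 2 := mul_pow c x 2
      _ ≤ max 1 (c ^ 2) * x ^ 2 := by gcongr; exact le_max_right _ _
  · have h0 : 0 < exp (-(c * x)) := exp_pos _
    have h1 : exp (-(c * x)) ≤ 1 := exp_le_one_iff.mpr (by nlinarith)
    rw [if_neg (not_lt.mpr hx1), add_zero, min_eq_left (by nlinarith), mul_one,
      abs_of_nonpos (by linarith)]
    linarith [le_max_left 1 (c ^ 2)]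

lemma abs_levyKernel_one_le {a c x : ℝ} (ha : 0 < a) (hac : a ≤ c) (hx : 0 < x) :
    |levyKernel 1 c x| ≤ max c (1 / a) * min 1 (x ^ 2) := by
  simp only [levyKernel]
  rcases lt_or_ge x 1 with hx1 | hx1
  · rw [if_pos hx1, min_eq_right (by nlinarith)]
    have h1 : 1 - exp (-(c * x)) ≤ c * x := by linarith [add_one_le_exp (-(c * x))]
    have h2 : exp (-(c * x)) ≤ 1 := exp_le_one_iff.mpr (by nlinarith)
    rw [abs_of_nonneg (by nlinarith)]
    calc x - x * exp (-(c * x)) ≤ c * x ^ 2 := by nlinarith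
      _ ≤ max c (1 / a) * x ^ 2 := by gcongr; exact le_max_left _ _
  · have hexp : exp (-(c * x)) ≤ exp (-(a * x)) := exp_le_exp.mpr (by nlinarith)
    have h := pow_mul_exp_neg_le ha hx.le 1
    rw [if_neg (not_lt.mpr hx1), zero_sub, abs_neg, abs_of_nonneg (by positivity),
      min_eq_left (by nlinarith), mul_one]
    simp only [pow_one, Nat.factorial_one, Nat.cast_one] at h
    calc x * exp (-(c * x)) ≤ x * exp (-(a * x)) := by gcongr
      _ ≤ max c (1 / a) := h.trans (le_max_right _ _)

lemma abs_levyKernel_add_two_le {a c x : ℝ} (ha : 0 < a) (hac : a ≤ c) (hx : 0 < x) (n : ℕ) :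
    |levyKernel (n + 2) c x| ≤ max 1 ((n + 2)! / a ^ (n + 2)) * min 1 (x ^ 2) := by
  simp only [levyKernel]
  rw [abs_mul, abs_neg_one_pow, one_mul, abs_of_nonneg (by positivity)]
  have h1 : exp (-(c * x)) ≤ 1 := exp_le_one_iff.mpr (by nlinarith)
  rcases lt_or_ge x 1 with hx1 | hx1
  · rw [min_eq_right (by nlinarith)]
    calc x ^ (n + 2) * exp (-(c * x)) ≤ x ^ 2 * 1 :=
          mul_le_mul (pow_le_pow_of_le_one hx.le hx1.le (by omega)) h1 (by positivity)
            (by positivity)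
      _ ≤ max 1 ((n + 2)! / a ^ (n + 2)) * x ^ 2 := by
          rw [mul_one]; exact le_mul_of_one_le_left (by positivity) (le_max_left _ _)
  · have hexp : exp (-(c * x)) ≤ exp (-(a * x)) := exp_le_exp.mpr (by nlinarith)
    rw [min_eq_left (by nlinarith), mul_one]
    calc x ^ (n + 2) * exp (-(c * x)) ≤ x ^ (n + 2) * exp (-(a * x)) := by gcongr
      _ ≤ (n + 2)! / a ^ (n + 2) := pow_mul_exp_neg_le ha hx.le _
      _ ≤ _ := le_max_right _ _

lemma exists_abs_levyKernel_succ_le (n : ℕ) {a : ℝ} (ha : 0 < a) (T : ℝ) :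
    ∃ C, ∀ c ∈ Icc a T, ∀ x, 0 < x → |levyKernel (n + 1) c x| ≤ C * min 1 (x ^ 2) := by
  match n with
  | 0 =>
    refine ⟨max T (1 / a), fun c hc x hx => (abs_levyKernel_one_le ha hc.1 hx).trans ?_⟩
    gcongr
    exact hc.2
  | n + 1 =>
    exact ⟨_, fun c hc x hx => abs_levyKernel_add_two_le ha hc.1 hx n⟩

lemma neg_one_pow_mul_lkDeriv_add_two (α β : ℝ) (ν : Measure ℝ) (k : ℕ) (c : ℝ) :
    (-1) ^ k * lkDeriv α β ν (k + 2) c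
      = levyPoly α β (k + 2) c + ∫ x, x ^ (k + 2) * exp (-(c * x)) ∂ν := by
  have hpoly : (-1) ^ k * levyPoly α β (k + 2) c = levyPoly α β (k + 2) c := by
    cases k <;> simp [levyPoly]
  rw [lkDeriv, mul_add, hpoly]
  simp only [levyKernel]
  rw [integral_const_mul, ← mul_assoc, ← pow_add, Even.neg_one_pow ⟨k, rfl⟩, one_mul]

lemma hasSum_pow_div_factorial_add_two (u : ℝ) :
    HasSum (fun k => u ^ (k + 2) / (k + 2)!) (exp u - 1 - u) := by
  have h := (hasSum_nat_add_iff' 2).mpr (exp_eq_exp_ℝ ▸ NormedSpace.expSeries_div_hasSum_exp u)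
  simpa [Finset.sum_range_succ, sub_sub] using h

lemma levyKernel_taylor_remainder (q t x : ℝ) :
    levyKernel 0 (q - t) x - levyKernel 0 q x + t * levyKernel 1 q x
      = exp (-(q * x)) * (exp (t * x) - 1 - t * x) := by
  have hexp : exp (-((q - t) * x)) = exp (-(q * x)) * exp (t * x) := by
    rw [← exp_add]; ring_nf
  simp only [levyKernel, hexp]
  split_ifs <;> ring

section Integral

variable {ν : Measure ℝ} (hpos : ∀ᵐ x ∂ν, 0 < x) (hν : Integrable (fun x => min 1 (x ^ 2)) ν)
include hpos hν

lemma integrable_of_abs_le_mul_min {g : ℝ → ℝ} (hg : AEStronglyMeasurable g ν) {C : ℝ}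
    (h : ∀ x, 0 < x → |g x| ≤ C * min 1 (x ^ 2)) : Integrable g ν :=
  (hν.const_mul C).mono' hg (hpos.mono fun x hx => h x hx)

lemma integrable_levyKernel_zero {c : ℝ} (hc : 0 ≤ c) : Integrable (levyKernel 0 c) ν :=
  integrable_of_abs_le_mul_min hpos hν (measurable_levyKernel 0 c).aestronglyMeasurable
    fun _ hx => abs_levyKernel_zero_le hc hx

lemma integrable_levyKernel (n : ℕ) {c : ℝ} (hc : 0 < c) : Integrable (levyKernel n c) ν := by
  cases n with
  | zero => exact integrable_levyKernel_zero hpos hν hc.le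
  | succ n =>
    obtain ⟨C, hC⟩ := exists_abs_levyKernel_succ_le n hc c
    exact integrable_of_abs_le_mul_min hpos hν (measurable_levyKernel _ c).aestronglyMeasurable
      (hC c ⟨le_rfl, le_rfl⟩)

lemma hasDerivAt_integral_levyKernel (n : ℕ) {c : ℝ} (hc : 0 < c) :
    HasDerivAt (fun c => ∫ x, levyKernel n c x ∂ν) (∫ x, levyKernel (n + 1) c x ∂ν) c := by
  obtain ⟨C, hC⟩ := exists_abs_levyKernel_succ_le n (half_pos hc) (2 * c)
  refine (hasDerivAt_integral_of_dominated_loc_of_deriv_le (Icc_mem_nhds (by linarith)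
    (by linarith)) (Eventually.of_forall fun c => (measurable_levyKernel n c).aestronglyMeasurable)
    (integrable_levyKernel hpos hν n hc) (measurable_levyKernel _ c).aestronglyMeasurable
    (hpos.mono fun x hx t ht => hC t ht x hx) (hν.const_mul C)
    (Eventually.of_forall fun x t _ => hasDerivAt_levyKernel n x t)).2

lemma hasDerivAt_lkDeriv (α β : ℝ) (n : ℕ) {c : ℝ} (hc : 0 < c) :
    HasDerivAt (lkDeriv α β ν n) (lkDeriv α β ν (n + 1) c) c :=
  (hasDerivAt_levyPoly α β n c).add (hasDerivAt_integral_levyKernel hpos hν n hc)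

lemma iteratedDeriv_lkDeriv_zero (α β : ℝ) (n : ℕ) {c : ℝ} (hc : 0 < c) :
    iteratedDeriv n (lkDeriv α β ν 0) c = lkDeriv α β ν n c := by
  induction n generalizing c with
  | zero => rw [iteratedDeriv_zero]
  | succ n ih =>
    have hev : iteratedDeriv n (lkDeriv α β ν 0) =ᶠ[𝓝 c] lkDeriv α β ν n :=
      eventually_of_mem (Ioi_mem_nhds hc) fun y hy => ih hy
    rw [iteratedDeriv_succ, hev.deriv_eq, (hasDerivAt_lkDeriv hpos hν α β n hc).deriv]

lemma lkDeriv_zero_sub_add (α β : ℝ) {q t : ℝ} (hq : 0 < q) (htq : t ≤ q) :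
    lkDeriv α β ν 0 (q - t) - lkDeriv α β ν 0 q + t * lkDeriv α β ν 1 q
      = β * t ^ 2 + ∫ x, levyKernel 0 (q - t) x - levyKernel 0 q x + t * levyKernel 1 q x ∂ν := by
  have h0 := integrable_levyKernel_zero hpos hν (sub_nonneg.mpr htq)
  have h1 := integrable_levyKernel hpos hν 0 hq
  have h2 := (integrable_levyKernel hpos hν 1 hq).const_mul t
  rw [integral_add (f := fun x => levyKernel 0 (q - t) x - levyKernel 0 q x) (h0.sub h1) h2,
    integral_sub h0 h1, integral_const_mul]
  simp only [lkDeriv, levyPoly]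
  ring

lemma hasSum_integral_pow_mul_exp {q t : ℝ} (hq : 0 < q) (ht : 0 ≤ t) (htq : t ≤ q) :
    HasSum (fun k => t ^ (k + 2) / (k + 2)! * ∫ x, x ^ (k + 2) * exp (-(q * x)) ∂ν)
      (∫ x, levyKernel 0 (q - t) x - levyKernel 0 q x + t * levyKernel 1 q x ∂ν) := by
  set F : ℕ → ℝ → ℝ := fun k x => t ^ (k + 2) / (k + 2)! * (x ^ (k + 2) * exp (-(q * x)))
  have hF : ∀ x, HasSum (F · x)
      (levyKernel 0 (q - t) x - levyKernel 0 q x + t * levyKernel 1 q x) := fun x => by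
    rw [levyKernel_taylor_remainder, mul_comm]
    exact ((hasSum_pow_div_factorial_add_two (t * x)).mul_right (exp (-(q * x)))).congr_fun
      fun k => by simp only [F]; ring
  have hint : Integrable
      (fun x => levyKernel 0 (q - t) x - levyKernel 0 q x + t * levyKernel 1 q x) ν :=
    ((integrable_levyKernel_zero hpos hν (sub_nonneg.mpr htq)).sub
      (integrable_levyKernel hpos hν 0 hq)).add ((integrable_levyKernel hpos hν 1 hq).const_mul t)
  simp_rw [← integral_const_mul]
  -- the terms are nonnegative, so the series dominates itself
  refine hasSum_integral_of_dominated_convergence F (fun k => by fun_prop)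
    (fun k => hpos.mono fun x hx => (Real.norm_of_nonneg (by positivity)).le)
    (Eventually.of_forall fun x => (hF x).summable) ?_ (Eventually.of_forall hF)
  simpa only [(hF _).tsum_eq] using hint

end Integral

lemma abs_lkDeriv_add_two {α β : ℝ} (hβ : 0 ≤ β) {ν : Measure ℝ} (hpos : ∀ᵐ x ∂ν, 0 < x)
    (k : ℕ) (c : ℝ) :
    |lkDeriv α β ν (k + 2) c| = levyPoly α β (k + 2) c + ∫ x, x ^ (k + 2) * exp (-(c * x)) ∂ν := by
  have hpoly : 0 ≤ levyPoly α β (k + 2) c := by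
    cases k <;> simp [levyPoly, hβ]
  have hint : 0 ≤ ∫ x, x ^ (k + 2) * exp (-(c * x)) ∂ν :=
    integral_nonneg_of_ae (hpos.mono fun x hx => by positivity)
  have h := neg_one_pow_mul_lkDeriv_add_two α β ν k c
  rw [← h, ← abs_of_nonneg (h ▸ add_nonneg hpoly hint : 0 ≤ (-1) ^ k * lkDeriv α β ν (k + 2) c),
    abs_mul, abs_neg_one_pow, one_mul]

namespace IsBMWith

variable {ψ : ℝ → ℝ} {α β : ℝ} {ν : Measure ℝ}

lemma ae_pos (h : IsBMWith ψ α β ν) : ∀ᵐ x ∂ν, 0 < x :=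
  measure_mono_null (fun x (hx : ¬0 < x) => not_lt.mp hx) h.2.1

lemma integrable_min_one_sq (h : IsBMWith ψ α β ν) : Integrable (fun x => min 1 (x ^ 2)) ν := by
  refine ⟨(by fun_prop : Measurable fun x : ℝ => min 1 (x ^ 2)).aestronglyMeasurable, ?_⟩
  rw [hasFiniteIntegral_iff_ofReal (Eventually.of_forall fun x => by positivity)]
  exact h.2.2.1

lemma apply_eq_lkDeriv_zero (h : IsBMWith ψ α β ν) {c : ℝ} (hc : 0 ≤ c) :
    ψ c = lkDeriv α β ν 0 c :=
  h.2.2.2 c hc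

lemma iteratedDerivWithin_eq (h : IsBMWith ψ α β ν) (n : ℕ) {q : ℝ} (hq : 0 < q) :
    iteratedDerivWithin n ψ (Ioi 0) q = lkDeriv α β ν n q := by
  have hev : ψ =ᶠ[𝓝 q] lkDeriv α β ν 0 :=
    eventually_of_mem (Ioi_mem_nhds hq) fun c hc => h.apply_eq_lkDeriv_zero (le_of_lt hc)
  rw [iteratedDerivWithin_of_isOpen isOpen_Ioi hq, hev.iteratedDeriv_eq,
    iteratedDeriv_lkDeriv_zero h.ae_pos h.integrable_min_one_sq α β n hq]

theorem hasSum_taylor (h : IsBMWith ψ α β ν) {q t : ℝ} (hq : 0 < q) (ht : 0 ≤ t) (htq : t ≤ q) :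
    HasSum (fun k => t ^ (k + 2) / (k + 2)! * |iteratedDerivWithin (k + 2) ψ (Ioi 0) q|)
      (ψ (q - t) - ψ q + t * derivWithin ψ (Ioi 0) q) := by
  have hpoly : HasSum (fun k => t ^ (k + 2) / (k + 2)! * levyPoly α β (k + 2) q) (β * t ^ 2) := by
    convert hasSum_single 0 fun k hk => ?_ using 1
    · simp [levyPoly]; ring
    · obtain ⟨k, rfl⟩ := Nat.exists_eq_succ_of_ne_zero hk
      simp [levyPoly]
  simp_rw [h.iteratedDerivWithin_eq _ hq, abs_lkDeriv_add_two h.1 h.ae_pos, mul_add]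
  rw [← iteratedDerivWithin_one, h.iteratedDerivWithin_eq 1 hq,
    h.apply_eq_lkDeriv_zero (sub_nonneg.mpr htq), h.apply_eq_lkDeriv_zero hq.le,
    lkDeriv_zero_sub_add h.ae_pos h.integrable_min_one_sq α β hq htq]
  exact hpoly.add (hasSum_integral_pow_mul_exp h.ae_pos h.integrable_min_one_sq hq ht htq)

end IsBMWith

lemma xiL_nonneg {ψ : ℝ → ℝ} {q : ℝ} (hq : 0 ≤ q) (hψq : 0 ≤ ψ q)
    (hD : 0 ≤ derivWithin ψ (Ioi 0) q) : ∀ k, 0 ≤ xiL ψ q k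
  | 0 => div_nonneg hψq (mul_nonneg hq hD)
  | 1 => le_rfl
  | k + 2 => by rw [xiL]; positivity

lemma xiL_add_two_mul_pow {ψ : ℝ → ℝ} {q : ℝ} (hq : q ≠ 0) (s : ℝ) (k : ℕ) :
    xiL ψ q (k + 2) * s ^ (k + 2)
      = (s * q) ^ (k + 2) / (k + 2)! * |iteratedDerivWithin (k + 2) ψ (Ioi 0) q|
        / (q * derivWithin ψ (Ioi 0) q) := by
  rw [xiL]
  field_simp
  ring

namespace IsBranchingMechanism

variable {ψ : ℝ → ℝ}

lemma apply_zero (h : IsBranchingMechanism ψ) : ψ 0 = 0 := by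
  obtain ⟨α, β, ν, -, -, -, hψ⟩ := h
  simp [hψ 0 le_rfl]

theorem hasSum_taylor (h : IsBranchingMechanism ψ) {q t : ℝ} (hq : 0 < q) (ht : 0 ≤ t)
    (htq : t ≤ q) :
    HasSum (fun k => t ^ (k + 2) / (k + 2)! * |iteratedDerivWithin (k + 2) ψ (Ioi 0) q|)
      (ψ (q - t) - ψ q + t * derivWithin ψ (Ioi 0) q) := by
  obtain ⟨α, β, ν, h⟩ := h
  exact h.hasSum_taylor hq ht htq

lemma le_mul_derivWithin (h : IsBranchingMechanism ψ) {q : ℝ} (hq : 0 < q) :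
    ψ q ≤ q * derivWithin ψ (Ioi 0) q := by
  have := (h.hasSum_taylor hq hq.le le_rfl).nonneg fun k => by positivity
  rw [sub_self, h.apply_zero] at this
  linarith

lemma hasSum_xiL_mul_pow (h : IsBranchingMechanism ψ) {q : ℝ} (hq : 0 < q)
    (hD : derivWithin ψ (Ioi 0) q ≠ 0) {s : ℝ} (hs : s ∈ Icc 0 1) :
    HasSum (fun k => xiL ψ q k * s ^ k) (s + ψ ((1 - s) * q) / (q * derivWithin ψ (Ioi 0) q)) := by
  have htail := (h.hasSum_taylor hq (mul_nonneg hs.1 hq.le)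
    (mul_le_of_le_one_left hq.le hs.2)).div_const (q * derivWithin ψ (Ioi 0) q)
  have hval : s + ψ ((1 - s) * q) / (q * derivWithin ψ (Ioi 0) q)
        - ∑ k ∈ Finset.range 2, xiL ψ q k * s ^ k
      = (ψ (q - s * q) - ψ q + s * q * derivWithin ψ (Ioi 0) q)
        / (q * derivWithin ψ (Ioi 0) q) := by
    rw [Finset.sum_range_succ, Finset.sum_range_one, xiL, xiL, show (1 - s) * q = q - s * q by ring]
    field_simp
    ring
  rw [← hasSum_nat_add_iff' 2, hval]
  simp_rw [xiL_add_two_mul_pow hq.ne']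
  exact htail

end IsBranchingMechanism

/-- For a branching mechanism `ψ` and `q > 0` with `λ = ψ(q) > 0`: `ψ'(q) > 0`, the family
`ξ_λ` is a probability distribution on `ℕ` (in particular the series
`Σ_{k≥2} q^k |ψ^{(k)}(q)|/k!` converges), and its generating function is
`φ_λ(s) = s + ψ((1-s)q)/(q ψ'(q))` on `[0,1]`. -/
theorem xiL_prob_and_pgf (ψ : ℝ → ℝ) (hψ : IsBranchingMechanism ψ)
    (q : ℝ) (hq : 0 < q) (hl : 0 < ψ q) :
    0 < derivWithin ψ (Set.Ioi 0) q ∧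
    (∀ k : ℕ, 0 ≤ xiL ψ q k) ∧
    Summable (fun k : ℕ =>
      q ^ (k + 2) * |iteratedDerivWithin (k + 2) ψ (Set.Ioi 0) q| /
        (Nat.factorial (k + 2) : ℝ)) ∧
    Summable (xiL ψ q) ∧ (∑' k : ℕ, xiL ψ q k) = 1 ∧
    ∀ s ∈ Set.Icc (0 : ℝ) 1,
      (∑' k : ℕ, xiL ψ q k * s ^ k)
        = s + ψ ((1 - s) * q) / (q * derivWithin ψ (Set.Ioi 0) q) := by
  have hD : 0 < derivWithin ψ (Ioi 0) q :=
    pos_of_mul_pos_right (hl.trans_le (hψ.le_mul_derivWithin hq)) hq.le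
  have hpgf := fun s (hs : s ∈ Icc (0 : ℝ) 1) => hψ.hasSum_xiL_mul_pow hq hD.ne' hs
  have hmass : HasSum (xiL ψ q) 1 := by
    simpa [hψ.apply_zero] using hpgf 1 ⟨zero_le_one, le_rfl⟩
  refine ⟨hD, xiL_nonneg hq.le hl.le hD.le, ?_, hmass.summable, hmass.tsum_eq,
    fun s hs => (hpgf s hs).tsum_eq⟩
  simpa only [div_mul_eq_mul_div] using (hψ.hasSum_taylor hq hq.le le_rfl).summable
end
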